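/- arXiv:2208.11364 — 4 statements merged into one kernel-verified Lean document; each statement's English description precedes it below -/
import Mathlib

section
/- (Lemma 10, item 2: separation of the unsafe set from the closed reachable set) Assume Σ : ẋ ∈ F(x) is forward complete, F is continuous with nonempty compact convex values, and Σ is robustly safe with respect to (X_o, X_u) with robust-safety margin ε̄_o. If closure X_o ∩ X_u = ∅, then for every continuous ε̄ : E → ℝ with 0 < ε̄(x) < ε̄_o(x) for all x, the reachable set K_ε̄ satisfies X_u ∩ closure K_ε̄ = ∅. -/
open MeasureTheory Set Pointwise Topology

noncomputable section

/-- Euclidean state space. -/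
abbrev Euc (n : ℕ) := EuclideanSpace ℝ (Fin n)

/-- `φ` is a solution of the perturbed differential inclusion
`ẋ ∈ F(x) + ε(x)·𝔹` on the interval `I ⊆ ℝ`. -/
def IsSolution {n : ℕ} (F : Euc n → Set (Euc n)) (ε : Euc n → ℝ) (I : Set ℝ)
    (φ : ℝ → Euc n) : Prop :=
  ∃ g : ℝ → Euc n, LocallyIntegrable g volume ∧
    (∀ t₀ ∈ I, ∀ t ∈ I, φ t = φ t₀ + ∫ s in t₀..t, g s) ∧
    (∀ᵐ s ∂volume, s ∈ I → g s ∈ F (φ s) + Metric.closedBall (0 : Euc n) (ε (φ s)))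

/-- `F` is upper semicontinuous (as a set-valued map). -/
def USC {n : ℕ} (F : Euc n → Set (Euc n)) : Prop :=
  ∀ x : Euc n, ∀ r > (0:ℝ), ∃ δ > (0:ℝ), ∀ y : Euc n, ‖y - x‖ < δ →
    F y ⊆ {z | ∃ w ∈ F x, ‖z - w‖ ≤ r}

/-- `F` is lower semicontinuous (as a set-valued map). -/
def LSC {n : ℕ} (F : Euc n → Set (Euc n)) : Prop :=
  ∀ x : Euc n, ∀ v ∈ F x, ∀ r > (0:ℝ), ∃ δ > (0:ℝ), ∀ y : Euc n, ‖y - x‖ < δ →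
    ∃ w ∈ F y, ‖w - v‖ ≤ r

/-- `F` has nonempty, compact and convex values. -/
def NCCValues {n : ℕ} (F : Euc n → Set (Euc n)) : Prop :=
  ∀ x, (F x).Nonempty ∧ IsCompact (F x) ∧ Convex ℝ (F x)

/-- The inclusion `ẋ ∈ F(x)` is forward complete: solutions on compact intervals
extend to arbitrarily larger compact intervals. -/
def ForwardComplete {n : ℕ} (F : Euc n → Set (Euc n)) : Prop :=
  ∀ (a b : ℝ) (φ : ℝ → Euc n), IsSolution F (fun _ => 0) (Icc a b) φ →
    ∀ b' ≥ b, ∃ ψ : ℝ → Euc n, IsSolution F (fun _ => 0) (Icc a b') ψ ∧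
      ∀ t ∈ Icc a b, ψ t = φ t

/-- `Σ_ε` is safe with respect to `(Xo, Xu)`. -/
def SafeWrt {n : ℕ} (F : Euc n → Set (Euc n)) (ε : Euc n → ℝ)
    (Xo Xu : Set (Euc n)) : Prop :=
  ∀ (a b : ℝ) (φ : ℝ → Euc n), a ≤ 0 → 0 ≤ b →
    IsSolution F ε (Icc a b) φ → φ 0 ∈ Xo → ∀ t ∈ Icc a b, φ t ∉ Xu

/-- `Σ` is robustly safe with respect to `(Xo, Xu)`. -/
def RobustlySafe {n : ℕ} (F : Euc n → Set (Euc n)) (Xo Xu : Set (Euc n)) : Prop :=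
  ∃ ε : Euc n → ℝ, Continuous ε ∧ (∀ x, 0 < ε x) ∧ SafeWrt F ε Xo Xu

/-- The reachable set of `Σ_ε` from `Xo`. -/
def Reach {n : ℕ} (F : Euc n → Set (Euc n)) (ε : Euc n → ℝ) (Xo : Set (Euc n)) :
    Set (Euc n) :=
  {y | ∃ t ≥ (0:ℝ), ∃ φ : ℝ → Euc n, IsSolution F ε (Icc 0 t) φ ∧ φ 0 ∈ Xo ∧ φ t = y}

/-- `φ` (with domain `I`) is a forward-maximal solution of `Σ_ε`. -/
def IsForwardMaximal {n : ℕ} (F : Euc n → Set (Euc n)) (ε : Euc n → ℝ)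
    (φ : ℝ → Euc n) (I : Set ℝ) : Prop :=
  (I = Ici (0:ℝ) ∧ IsSolution F ε I φ) ∨
  (∃ T : ℝ, 0 < T ∧ I = Ico 0 T ∧ IsSolution F ε I φ ∧
    ¬ ∃ ψ : ℝ → Euc n, IsSolution F ε (Icc 0 T) ψ ∧ ∀ t ∈ Ico 0 T, ψ t = φ t)

/-- `K` is locally recurrent for `Σ_ε` on `U₁`. -/
def LocallyRecurrent {n : ℕ} (F : Euc n → Set (Euc n)) (ε : Euc n → ℝ)
    (K U₁ : Set (Euc n)) : Prop :=
  ∀ (φ : ℝ → Euc n) (I : Set ℝ), IsForwardMaximal F ε φ I → φ 0 ∈ U₁ →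
    ∃ t ∈ I, φ t ∈ interior K

/-- `K` is forward contractive for `Σ_ε`. -/
def ForwardContractive {n : ℕ} (F : Euc n → Set (Euc n)) (ε : Euc n → ℝ)
    (K : Set (Euc n)) : Prop :=
  (∀ (T : ℝ) (φ : ℝ → Euc n), IsSolution F ε (Icc 0 T) φ → φ 0 ∈ K →
    ∀ t ∈ Icc 0 T, φ t ∈ K) ∧
  (∀ x₀ ∈ frontier K, ∀ T : ℝ, 0 < T → ∀ φ : ℝ → Euc n,
    IsSolution F ε (Icc 0 T) φ → φ 0 = x₀ →
    ∃ T' ∈ Ioc (0:ℝ) T, ∀ t ∈ Ioc (0:ℝ) T', φ t ∈ interior K)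

/-- Assumption (A6) for a closed set `K` with closed neighborhood set `U₁`. -/
def AssumptionA6 {n : ℕ} (F : Euc n → Set (Euc n)) (K U₁ : Set (Euc n)) : Prop :=
  IsClosed U₁ ∧ frontier K ⊆ interior U₁ ∧
  LocallyRecurrent F (fun _ => 0) K U₁ ∧
  LocallyRecurrent (fun x => -F x) (fun _ => 0) Kᶜ U₁ ∧
  ForwardContractive F (fun _ => 0) K ∧
  ForwardContractive (fun x => -F x) (fun _ => 0) (interior K)ᶜ


/-! ### Auxiliary lemmas -/

lemma locInt_intervalIntegrable {n : ℕ} {g : ℝ → Euc n}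
    (hg : LocallyIntegrable g volume) (A B : ℝ) : IntervalIntegrable g volume A B := by
  rw [intervalIntegrable_iff]
  exact (hg.integrableOn_isCompact isCompact_uIcc).mono_set Ioc_subset_Icc_self

lemma indicator_integral {n : ℕ} (a' A B : ℝ) (k : Euc n) :
    ∫ s in A..B, (Ioi a').indicator (fun _ => k) s = (max B a' - max A a') • k := by
  have hloc : LocallyIntegrable ((Ioi a').indicator (fun _ : ℝ => k)) volume :=
    (locallyIntegrable_const k).indicator measurableSet_Ioi
  have base : ∀ C : ℝ, ∫ s in a'..C, (Ioi a').indicator (fun _ => k) s = (max C a' - a') • k := by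
    intro C
    rcases le_or_gt C a' with h | h
    · rw [max_eq_right h, sub_self, zero_smul]
      rw [intervalIntegral.integral_symm, ← neg_zero]
      congr 1
      have : EqOn ((Ioi a').indicator (fun _ : ℝ => k)) (fun _ => (0 : Euc n)) (uIcc C a') := by
        intro u hu
        rw [uIcc_of_le h] at hu
        exact indicator_of_notMem (by simpa using hu.2) _
      rw [intervalIntegral.integral_congr this, intervalIntegral.integral_zero]
    · rw [max_eq_left h.le, intervalIntegral.integral_of_le h.le]
      rw [setIntegral_congr_fun measurableSet_Ioc
        (fun u hu => indicator_of_mem (mem_Ioi.2 hu.1) _)]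
      rw [setIntegral_const, measureReal_def, Real.volume_Ioc, ENNReal.toReal_ofReal (by linarith)]
  have hadd := intervalIntegral.integral_add_adjacent_intervals
    (locInt_intervalIntegrable hloc A a') (locInt_intervalIntegrable hloc a' B)
  have hAa : ∫ s in A..a', (Ioi a').indicator (fun _ => k) s = -((max A a' - a') • k) := by
    rw [intervalIntegral.integral_symm, base A]
  rw [← hadd, hAa, base B]
  rw [← neg_smul, ← add_smul]
  congr 1
  ring

/-- Uniform bound for `F` on a compact set. -/
lemma usc_bound {n : ℕ} {F : Euc n → Set (Euc n)} (hUSC : USC F) (hVal : NCCValues F)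
    {K : Set (Euc n)} (hK : IsCompact K) :
    ∃ Λ : ℝ, 0 ≤ Λ ∧ ∀ x ∈ K, ∀ w ∈ F x, ‖w‖ ≤ Λ := by
  have hR : ∀ x : Euc n, ∃ R : ℝ, F x ⊆ Metric.closedBall 0 R := fun x =>
    ((hVal x).2.1.isBounded).subset_closedBall 0
  choose R hR using hR
  have hδ : ∀ x : Euc n, ∃ δ > (0:ℝ), ∀ y : Euc n, ‖y - x‖ < δ →
      F y ⊆ {z | ∃ w ∈ F x, ‖z - w‖ ≤ 1} := fun x => hUSC x 1 one_pos
  choose δ hδpos hδ using hδ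
  obtain ⟨t, -, hcov⟩ := hK.elim_nhds_subcover (fun x => Metric.ball x (δ x))
    (fun x _ => Metric.ball_mem_nhds x (hδpos x))
  refine ⟨∑ x ∈ t, (|R x| + 1), Finset.sum_nonneg (fun x _ => by positivity), ?_⟩
  intro x hx w hw
  obtain ⟨x₀, hx₀t, hxball⟩ := mem_iUnion₂.1 (hcov hx)
  have hsub := hδ x₀ x (by rwa [← dist_eq_norm, ← Metric.mem_ball]) hw
  obtain ⟨w₀, hw₀, hww₀⟩ := hsub
  have h1 : ‖w₀‖ ≤ R x₀ := by simpa using hR x₀ hw₀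
  have h2 : ‖w‖ ≤ R x₀ + 1 := by
    calc ‖w‖ ≤ ‖w₀‖ + ‖w - w₀‖ := by
          simpa using norm_add_le w₀ (w - w₀)
    _ ≤ R x₀ + 1 := add_le_add h1 hww₀
  refine h2.trans ?_
  calc R x₀ + 1 ≤ |R x₀| + 1 := by simp [le_abs_self]
  _ ≤ ∑ x ∈ t, (|R x| + 1) := Finset.single_le_sum (f := fun x => |R x| + 1)
      (fun x _ => by positivity) hx₀t

/-- Uniform (two-sided) continuity modulus for `F` on a compact set. -/
lemma f_modulus {n : ℕ} {F : Euc n → Set (Euc n)} (hUSC : USC F) (hLSC : LSC F)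
    (hVal : NCCValues F) {K : Set (Euc n)} (hK : IsCompact K) {r : ℝ} (hr : 0 < r) :
    ∃ η > (0:ℝ), ∀ q ∈ K, ∀ p : Euc n, ‖p - q‖ ≤ η → ∀ w ∈ F q,
      ∃ w' ∈ F p, ‖w - w'‖ ≤ r := by
  rcases K.eq_empty_or_nonempty with hKe | hKne
  · exact ⟨1, one_pos, by simp [hKe]⟩
  have stepA : ∀ x : Euc n, ∃ δ > (0:ℝ), ∀ p : Euc n, ‖p - x‖ < δ →
      ∀ v ∈ F x, ∃ w ∈ F p, ‖v - w‖ ≤ 2 * (r / 3) := by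
    intro x
    obtain ⟨tx, htxF, htxcov⟩ := (hVal x).2.1.elim_nhds_subcover
      (fun v => Metric.ball v (r / 3))
      (fun v _ => Metric.ball_mem_nhds v (by positivity))
    have htxne : tx.Nonempty := by
      obtain ⟨v0, hv0⟩ := (hVal x).1
      obtain ⟨v, hv, -⟩ := mem_iUnion₂.1 (htxcov hv0)
      exact ⟨v, hv⟩
    have hLv : ∀ v : Euc n, ∃ δ > (0:ℝ), v ∈ F x → ∀ p : Euc n, ‖p - x‖ < δ →
        ∃ w ∈ F p, ‖w - v‖ ≤ r / 3 := by
      intro v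
      by_cases hv : v ∈ F x
      · obtain ⟨δ, hδ0, hδ⟩ := hLSC x v hv (r / 3) (by positivity)
        exact ⟨δ, hδ0, fun _ => hδ⟩
      · exact ⟨1, one_pos, fun h => absurd h hv⟩
    choose δf hδf0 hδf using hLv
    refine ⟨tx.inf' htxne δf, (Finset.lt_inf'_iff htxne).2 fun v _ => hδf0 v, ?_⟩
    intro p hp v' hv'
    obtain ⟨v, hvtx, hv'ball⟩ := mem_iUnion₂.1 (htxcov hv')
    obtain ⟨w, hwFp, hwv⟩ := hδf v (htxF v hvtx) p
      (hp.trans_le (Finset.inf'_le δf hvtx))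
    refine ⟨w, hwFp, ?_⟩
    have h1 : ‖v' - v‖ < r / 3 := by rwa [← dist_eq_norm, ← Metric.mem_ball]
    calc ‖v' - w‖ = ‖(v' - v) + (v - w)‖ := by rw [sub_add_sub_cancel]
    _ ≤ ‖v' - v‖ + ‖v - w‖ := norm_add_le _ _
    _ ≤ r / 3 + r / 3 := add_le_add h1.le (by rwa [norm_sub_rev])
    _ = 2 * (r / 3) := by ring
  have stepB : ∀ x : Euc n, ∃ δ > (0:ℝ), ∀ q p : Euc n, ‖q - x‖ < δ → ‖p - x‖ < δ →
      ∀ w ∈ F q, ∃ w' ∈ F p, ‖w - w'‖ ≤ r := by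
    intro x
    obtain ⟨δ₁, hδ₁0, hδ₁⟩ := hUSC x (r / 3) (by positivity)
    obtain ⟨δ₂, hδ₂0, hδ₂⟩ := stepA x
    refine ⟨min δ₁ δ₂, lt_min hδ₁0 hδ₂0, ?_⟩
    intro q p hq hp w hw
    obtain ⟨v, hvFx, hwv⟩ := hδ₁ q (hq.trans_le (min_le_left _ _)) hw
    obtain ⟨w', hw'Fp, hvw'⟩ := hδ₂ p (hp.trans_le (min_le_right _ _)) v hvFx
    refine ⟨w', hw'Fp, ?_⟩
    calc ‖w - w'‖ = ‖(w - v) + (v - w')‖ := by rw [sub_add_sub_cancel]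
    _ ≤ ‖w - v‖ + ‖v - w'‖ := norm_add_le _ _
    _ ≤ r / 3 + 2 * (r / 3) := add_le_add hwv hvw'
    _ = r := by ring
  choose δB hδB0 hδB using stepB
  obtain ⟨t, -, hcov⟩ := hK.elim_nhds_subcover (fun x => Metric.ball x (δB x / 2))
    (fun x _ => Metric.ball_mem_nhds x (by have := hδB0 x; positivity))
  have htne : t.Nonempty := by
    obtain ⟨q0, hq0⟩ := hKne
    obtain ⟨x, hx, -⟩ := mem_iUnion₂.1 (hcov hq0)
    exact ⟨x, hx⟩
  refine ⟨t.inf' htne (fun x => δB x / 2),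
    (Finset.lt_inf'_iff htne).2 fun x _ => by have := hδB0 x; positivity, ?_⟩
  intro q hq p hpq w hw
  obtain ⟨x, hxt, hqball⟩ := mem_iUnion₂.1 (hcov hq)
  have hqx : ‖q - x‖ < δB x / 2 := by rwa [← dist_eq_norm, ← Metric.mem_ball]
  have hpx : ‖p - x‖ < δB x := by
    calc ‖p - x‖ = ‖(p - q) + (q - x)‖ := by rw [sub_add_sub_cancel]
    _ ≤ ‖p - q‖ + ‖q - x‖ := norm_add_le _ _
    _ < δB x / 2 + δB x / 2 :=
        add_lt_add_of_le_of_lt (hpq.trans (Finset.inf'_le _ hxt)) hqx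
    _ = δB x := by ring
  exact hδB x q p (hqx.trans_le (by linarith [hδB0 x])) hpx w hw

/-- Bootstrap estimate on the tail of a trajectory. -/
lemma tail_bound {n : ℕ} {φ g : ℝ → Euc n} {t A Λ : ℝ} {z : Euc n}
    (hid : ∀ u ∈ Icc A t, ∀ s ∈ Icc A t, φ s = φ u + ∫ τ in u..s, g τ)
    (hφc : ContinuousOn φ (Icc A t))
    (hA : A ≤ t) (hz : φ t = z)
    (hΛ : 0 < Λ)
    (hσ : Λ * (t - A) ≤ 1 / 2)
    (hgb : ∀ᵐ s ∂volume, s ∈ Icc A t → ‖φ s - z‖ ≤ 1 → ‖g s‖ ≤ Λ) :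
    ∀ s ∈ Icc A t, ‖φ s - z‖ ≤ Λ * (t - s) := by
  have key : ∀ u ∈ Icc A t, (∀ x ∈ Ioc u t, ‖φ x - z‖ ≤ 1) → ‖φ u - z‖ ≤ Λ * (t - u) := by
    intro u hu hball
    have hident := hid u hu t (right_mem_Icc.2 hA)
    have h1 : φ u - z = -(∫ τ in u..t, g τ) := by rw [hz] at hident; rw [hident]; abel
    rw [h1, norm_neg]
    have hae : ∀ᵐ x ∂volume, x ∈ Set.uIoc u t → ‖g x‖ ≤ Λ := by
      filter_upwards [hgb] with x hx hxI
      rw [uIoc_of_le hu.2] at hxI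
      exact hx ⟨hu.1.trans hxI.1.le, hxI.2⟩ (hball x hxI)
    calc ‖∫ τ in u..t, g τ‖ ≤ Λ * |t - u| :=
          intervalIntegral.norm_integral_le_of_norm_le_const_ae hae
    _ = Λ * (t - u) := by rw [abs_of_nonneg (by linarith [hu.2])]
  have stage1 : ∀ s ∈ Icc A t, ‖φ s - z‖ ≤ 1 := by
    by_contra hcon
    push_neg at hcon
    obtain ⟨s₀, hs₀, hs₀1⟩ := hcon
    set T : Set ℝ := {s ∈ Icc s₀ t | 1 ≤ ‖φ s - z‖} with hT
    have hTsub : T ⊆ Icc s₀ t := fun s hs => hs.1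
    have hTclosed : IsClosed T := by
      have hc : ContinuousOn (fun s => ‖φ s - z‖) (Icc s₀ t) :=
        ((hφc.mono (Icc_subset_Icc hs₀.1 le_rfl)).sub continuousOn_const).norm
      exact hc.preimage_isClosed_of_isClosed isClosed_Icc (isClosed_Ici (a := (1:ℝ)))
    have hTcomp : IsCompact T :=
      (isCompact_Icc (a := s₀) (b := t)).of_isClosed_subset hTclosed hTsub
    have hTne : T.Nonempty := ⟨s₀, ⟨le_rfl, hs₀.2⟩, hs₀1.le⟩
    set u := sSup T with hu
    have huT : u ∈ T := hTcomp.sSup_mem hTne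
    have huIcc : u ∈ Icc A t := ⟨hs₀.1.trans (huT.1.1), huT.1.2⟩
    have hub : ∀ x ∈ Ioc u t, ‖φ x - z‖ ≤ 1 := by
      intro x hx
      by_contra hx1
      push_neg at hx1
      have hxT : x ∈ T := ⟨⟨huT.1.1.trans hx.1.le, hx.2⟩, hx1.le⟩
      exact absurd (le_csSup hTcomp.bddAbove hxT) (not_le.2 hx.1)
    have := key u huIcc hub
    have h2 : Λ * (t - u) ≤ 1 / 2 := by
      have : t - u ≤ t - A := by linarith [huIcc.1]
      nlinarith
    linarith [huT.2]
  intro s hs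
  exact key s hs (fun x hx => stage1 x ⟨hs.1.trans hx.1.le, hx.2⟩)

set_option maxHeartbeats 1000000 in
/-- Lemma 10, item 2: separation of the unsafe set from the closed reachable set. -/
theorem lemma10_separation {n : ℕ} (hn : 1 ≤ n)
    (F : Euc n → Set (Euc n)) (Xo Xu : Set (Euc n))
    (hFC : ForwardComplete F) (hUSC : USC F) (hLSC : LSC F) (hVal : NCCValues F)
    (εbaro : Euc n → ℝ) (hεbaro : Continuous εbaro) (hεbaropos : ∀ x, 0 < εbaro x)
    (hsafe : SafeWrt F εbaro Xo Xu)
    (hsep : closure Xo ∩ Xu = ∅) :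
    ∀ εbar : Euc n → ℝ, Continuous εbar → (∀ x, 0 < εbar x ∧ εbar x < εbaro x) →
      Xu ∩ closure (Reach F εbar Xo) = ∅ := by
  intro εbar hεbar hεbarlt
  rw [Set.eq_empty_iff_forall_notMem]
  rintro y ⟨hyXu, hyCl⟩
  by_cases hyXo : y ∈ closure Xo
  · have : y ∈ closure Xo ∩ Xu := ⟨hyXo, hyXu⟩
    rw [hsep] at this
    exact this
  obtain ⟨d, hd0, hdball⟩ := Metric.isOpen_iff.1 isClosed_closure.isOpen_compl y hyXo
  set B2 := Metric.closedBall y 2 with hB2def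
  have hB2c : IsCompact B2 := isCompact_closedBall y 2
  have hB2ne : B2.Nonempty := ⟨y, Metric.mem_closedBall_self (by norm_num)⟩
  -- uniform bound for F and for εbaro on B2
  obtain ⟨Λ₀, hΛ₀0, hΛ₀⟩ := usc_bound hUSC hVal hB2c
  obtain ⟨xM, hxM, hxMmax⟩ := hB2c.exists_isMaxOn hB2ne hεbaro.continuousOn
  have hEb : ∀ x ∈ B2, εbaro x ≤ εbaro xM := fun x hx => hxMmax hx
  set Λ := Λ₀ + εbaro xM + 1 with hΛdef
  have hΛ0 : 0 < Λ := by have := hεbaropos xM; linarith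
  -- minimal safety margin m on B2
  obtain ⟨xm, hxm, hxmmin⟩ := hB2c.exists_isMinOn hB2ne (hεbaro.sub hεbar).continuousOn
  set m := εbaro xm - εbar xm with hmdef
  have hm0 : 0 < m := sub_pos.2 (hεbarlt xm).2
  have hmle : ∀ x ∈ B2, m ≤ εbaro x - εbar x := fun x hx => hxmmin hx
  -- uniform continuity modulus for εbaro on B2
  obtain ⟨η₂, hη₂0, hη₂⟩ := Metric.uniformContinuousOn_iff.1
    (hB2c.uniformContinuousOn_of_continuous hεbaro.continuousOn) (m / 4) (by positivity)
  -- uniform modulus for F on the unit ball around y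
  obtain ⟨η₀, hη₀0, hη₀⟩ :=
    f_modulus hUSC hLSC hVal (isCompact_closedBall y 1) (r := m / 4) (by positivity)
  set σ := min 1 (min d 1 / (2 * Λ)) with hσdef
  have hmind : 0 < min d 1 := lt_min hd0 one_pos
  have hσ0 : 0 < σ := lt_min one_pos (by positivity)
  have hΛσ : Λ * σ ≤ min d 1 / 2 := by
    have h1 : σ ≤ min d 1 / (2 * Λ) := min_le_right _ _
    calc Λ * σ ≤ Λ * (min d 1 / (2 * Λ)) := by gcongr
    _ = min d 1 / 2 := by field_simp
  set ρ := min (min η₀ η₂) (min (σ * (m / 4)) (min d 1 / 2)) with hρdef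
  have hρ0 : 0 < ρ := lt_min (lt_min hη₀0 hη₂0) (lt_min (by positivity) (by positivity))
  have hρη₀ : ρ ≤ η₀ := (min_le_left _ _).trans (min_le_left _ _)
  have hρη₂ : ρ ≤ η₂ := (min_le_left _ _).trans (min_le_right _ _)
  have hρσm : ρ ≤ σ * (m / 4) := (min_le_right _ _).trans (min_le_left _ _)
  have hρd : ρ ≤ min d 1 / 2 := (min_le_right _ _).trans (min_le_right _ _)
  have hρhalf : ρ ≤ 1 / 2 := hρd.trans (by linarith [min_le_right d 1])
  obtain ⟨z, hzR, hyz⟩ := Metric.mem_closure_iff.1 hyCl ρ hρ0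
  obtain ⟨t, ht0, φ, ⟨g, hgloc, hid, hae⟩, hφ0, hφt⟩ := hzR
  have hzy : dist z y < ρ := by rwa [dist_comm]
  have hzy1 : dist z y ≤ 1 / 2 := hzy.le.trans hρhalf
  -- continuity of the trajectory
  have hφc : ContinuousOn φ (Icc 0 t) := by
    have hcont : Continuous fun s => φ 0 + ∫ τ in (0:ℝ)..s, g τ :=
      continuous_const.add
        (intervalIntegral.continuous_primitive (locInt_intervalIntegrable hgloc) 0)
    exact hcont.continuousOn.congr (fun s hs => hid 0 (left_mem_Icc.2 ht0) s hs)
  set A := max 0 (t - σ) with hAdef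
  have hA0 : 0 ≤ A := le_max_left _ _
  have hAt : A ≤ t := max_le ht0 (by linarith)
  have htA : t - A ≤ σ := by
    have : t - σ ≤ A := le_max_right _ _
    linarith
  have hsubI : Icc A t ⊆ Icc 0 t := Icc_subset_Icc hA0 le_rfl
  -- a.e. bound on the driving function near z
  have hgb : ∀ᵐ s ∂volume, s ∈ Icc A t → ‖φ s - z‖ ≤ 1 → ‖g s‖ ≤ Λ := by
    filter_upwards [hae] with s hs hsA hs1
    obtain ⟨w, hw, b, hb, hwb⟩ := Set.mem_add.1 (hs (hsubI hsA))
    have hφB2 : φ s ∈ B2 := by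
      rw [hB2def, Metric.mem_closedBall]
      calc dist (φ s) y ≤ dist (φ s) z + dist z y := dist_triangle _ _ _
      _ ≤ 1 + 1 := add_le_add (by rwa [dist_eq_norm]) (by linarith)
      _ = 2 := by norm_num
    have hwn : ‖w‖ ≤ Λ₀ := hΛ₀ _ hφB2 w hw
    have hbn : ‖b‖ ≤ εbaro xM := by
      have h1 : ‖b‖ ≤ εbar (φ s) := mem_closedBall_zero_iff.1 hb
      exact h1.trans ((le_of_lt (hεbarlt _).2).trans (hEb _ hφB2))
    calc ‖g s‖ = ‖w + b‖ := by rw [hwb]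
    _ ≤ ‖w‖ + ‖b‖ := norm_add_le _ _
    _ ≤ Λ := by rw [hΛdef]; linarith
  have htail : ∀ s ∈ Icc A t, ‖φ s - z‖ ≤ Λ * (t - s) :=
    tail_bound (fun u hu s hs => hid u (hsubI hu) s (hsubI hs)) (hφc.mono hsubI)
      hAt hφt hΛ0
      (by nlinarith [min_le_right d 1]) hgb
  rcases le_or_gt t σ with hts | hts
  · -- short trajectory: the initial point is too close to y
    have hA0' : A = 0 := max_eq_left (by linarith)
    have h0 := htail 0 (by rw [hA0']; exact left_mem_Icc.2 ht0)
    have h0' : ‖φ 0 - z‖ ≤ min d 1 / 2 := by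
      refine h0.trans ?_
      calc Λ * (t - 0) ≤ Λ * σ := by gcongr; linarith
      _ ≤ min d 1 / 2 := hΛσ
    have hφ0y : dist (φ 0) y < d := by
      calc dist (φ 0) y ≤ dist (φ 0) z + dist z y := dist_triangle _ _ _
      _ < min d 1 / 2 + ρ := by
          refine add_lt_add_of_le_of_lt (by rwa [dist_eq_norm]) hzy
      _ ≤ min d 1 / 2 + min d 1 / 2 := by linarith
      _ ≤ d := by linarith [min_le_left d 1]
    exact hdball (Metric.mem_ball.2 hφ0y) (subset_closure hφ0)
  · -- main case: ramp perturbation on the tail of the trajectory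
    have hAeq : A = t - σ := max_eq_right (by linarith)
    set v := y - z with hvdef
    have hvρ : ‖v‖ < ρ := by rw [hvdef, ← dist_eq_norm]; exact hyz
    have hv0 : 0 ≤ ‖v‖ := norm_nonneg v
    set c : ℝ → ℝ := fun s => σ⁻¹ * (max s A - A) with hcdef
    set ψ : ℝ → Euc n := fun s => φ s + c s • v with hψdef
    set h : ℝ → Euc n := (Ioi A).indicator (fun _ => σ⁻¹ • v) with hhdef
    have hhloc : LocallyIntegrable h volume :=
      (locallyIntegrable_const _).indicator measurableSet_Ioi
    have hc0 : c 0 = 0 := by rw [hcdef]; simp [max_eq_right hA0]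
    have hct : c t = 1 := by
      show σ⁻¹ * (max t A - A) = 1
      rw [max_eq_left hAt, hAeq]
      field_simp
      ring
    have hψ0 : ψ 0 = φ 0 := by rw [hψdef]; simp [hc0]
    have hψt : ψ t = y := by
      rw [hψdef]; simp only [hct, one_smul, hφt, hvdef]; abel
    have hsol : IsSolution F εbaro (Icc 0 t) ψ := by
      refine ⟨fun s => g s + h s, hgloc.add hhloc, ?_, ?_⟩
      · intro t₀ ht₀ s hs
        have hint : ∫ τ in t₀..s, (g τ + h τ) =
            (∫ τ in t₀..s, g τ) + ∫ τ in t₀..s, h τ :=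
          intervalIntegral.integral_add (locInt_intervalIntegrable hgloc _ _)
            (locInt_intervalIntegrable hhloc _ _)
        have hind : ∫ τ in t₀..s, h τ = (c s - c t₀) • v := by
          rw [hhdef, indicator_integral A t₀ s (σ⁻¹ • v), smul_smul, hcdef]
          congr 1
          ring
        have hφid := hid t₀ ht₀ s hs
        show φ s + c s • v = (φ t₀ + c t₀ • v) + ∫ τ in t₀..s, (g τ + h τ)
        rw [hint, hind, hφid, sub_smul]
        abel
      · filter_upwards [hae] with s hsae hs
        obtain ⟨w, hw, b, hb, hwb⟩ := Set.mem_add.1 (hsae hs)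
        have hbn : ‖b‖ ≤ εbar (φ s) := mem_closedBall_zero_iff.1 hb
        rcases le_or_gt s A with hsA | hsA
        · have hcs : c s = 0 := by rw [hcdef]; simp [max_eq_right hsA]
          have hhs : h s = 0 := indicator_of_notMem (by simpa using hsA) _
          have hψs : ψ s = φ s := by rw [hψdef]; simp [hcs]
          rw [hψs, hhs, add_zero]
          refine Set.mem_add.2 ⟨w, hw, b, ?_, hwb⟩
          exact mem_closedBall_zero_iff.2 (hbn.trans (le_of_lt (hεbarlt _).2))
        · have hst : s ∈ Icc A t := ⟨hsA.le, hs.2⟩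
          have hφsz : ‖φ s - z‖ ≤ min d 1 / 2 := by
            refine (htail s hst).trans ?_
            calc Λ * (t - s) ≤ Λ * σ := by
                  have : t - s ≤ σ := by linarith [hst.1, htA]
                  gcongr
            _ ≤ min d 1 / 2 := hΛσ
          have hφsz' : ‖φ s - z‖ ≤ 1 / 2 := hφsz.trans (by linarith [min_le_right d 1])
          have hφB1 : φ s ∈ Metric.closedBall y 1 := by
            rw [Metric.mem_closedBall]
            calc dist (φ s) y ≤ dist (φ s) z + dist z y := dist_triangle _ _ _
            _ ≤ 1 / 2 + 1 / 2 := add_le_add (by rwa [dist_eq_norm]) hzy1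
            _ = 1 := by norm_num
          have hcs0 : 0 ≤ c s := by
            show 0 ≤ σ⁻¹ * (max s A - A)
            have h1 : A ≤ max s A := le_max_right _ _
            have hσi : 0 ≤ σ⁻¹ := inv_nonneg.2 hσ0.le
            exact mul_nonneg hσi (by linarith)
          have hcs1 : c s ≤ 1 := by
            show σ⁻¹ * (max s A - A) ≤ 1
            rw [max_eq_left hsA.le]
            have : s - A ≤ σ := by linarith [hs.2, htA]
            calc σ⁻¹ * (s - A) ≤ σ⁻¹ * σ := by gcongr
            _ = 1 := inv_mul_cancel₀ (ne_of_gt hσ0)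
          have hψφ : ‖ψ s - φ s‖ ≤ ‖v‖ := by
            have h1 : ψ s - φ s = c s • v := by
              show φ s + c s • v - φ s = c s • v
              abel
            rw [h1, norm_smul, Real.norm_eq_abs, abs_of_nonneg hcs0]
            have := mul_le_mul_of_nonneg_right hcs1 hv0
            simpa using this
          obtain ⟨w', hw', hww'⟩ := hη₀ (φ s) hφB1 (ψ s)
            (hψφ.trans (hvρ.le.trans hρη₀)) w hw
          have hφB2 : φ s ∈ B2 := by
            rw [hB2def]
            exact Metric.closedBall_subset_closedBall (by norm_num) hφB1
          have hψB2 : ψ s ∈ B2 := by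
            rw [hB2def, Metric.mem_closedBall]
            calc dist (ψ s) y ≤ dist (ψ s) (φ s) + dist (φ s) y := dist_triangle _ _ _
            _ ≤ ‖v‖ + 1 := by
                refine add_le_add ?_ (Metric.mem_closedBall.1 hφB1)
                rw [dist_eq_norm]; exact hψφ
            _ ≤ 2 := by linarith [hvρ.le.trans hρhalf]
          have hεψ : εbaro (φ s) ≤ εbaro (ψ s) + m / 4 := by
            have hd1 : dist (φ s) (ψ s) < η₂ := by
              rw [dist_comm, dist_eq_norm]
              exact lt_of_le_of_lt hψφ (hvρ.trans_le hρη₂)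
            have := hη₂ (φ s) hφB2 (ψ s) hψB2 hd1
            rw [Real.dist_eq] at this
            have := abs_lt.1 this
            linarith [this.2]
          have hεm : εbar (φ s) ≤ εbaro (φ s) - m := by linarith [hmle _ hφB2]
          have hσv : σ⁻¹ * ‖v‖ ≤ m / 4 := by
            have h1 : ‖v‖ ≤ σ * (m / 4) := hvρ.le.trans hρσm
            calc σ⁻¹ * ‖v‖ ≤ σ⁻¹ * (σ * (m / 4)) := by gcongr
            _ = m / 4 := by field_simp
          have hhs : h s = σ⁻¹ • v := indicator_of_mem hsA _
          refine Set.mem_add.2 ⟨w', hw', (w - w') + b + σ⁻¹ • v, ?_, ?_⟩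
          · refine mem_closedBall_zero_iff.2 ?_
            have hn3 : ‖(w - w') + b + σ⁻¹ • v‖ ≤ ‖w - w'‖ + ‖b‖ + ‖σ⁻¹ • v‖ :=
              norm_add₃_le
            have hn4 : ‖σ⁻¹ • v‖ = σ⁻¹ * ‖v‖ := by
              rw [norm_smul, Real.norm_eq_abs, abs_of_nonneg (by positivity)]
            refine hn3.trans ?_
            rw [hn4]
            linarith
          · rw [hhs, ← hwb]; abel
    have := hsafe 0 t ψ le_rfl ht0 hsol (by rw [hψ0]; exact hφ0) t (right_mem_Icc.2 ht0)
    rw [hψt] at this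
    exact this hyXu
end
end

section
/- (Lemma 12: inflating the reachable set while preserving recurrence and contractivity) Assume Σ : ẋ ∈ F(x) is forward complete and F is continuous with nonempty compact convex values. Let X_o ⊆ E, let ε̄, ε₁, ε₂ : E → ℝ be continuous with 0 < ε₂(x) < ε₁(x) < ε̄(x) for all x, and let K_ε̄ be the reachable set. Let U₁ ⊆ E be closed with frontier K_ε̄ ⊆ interior U₁ such that for every continuous ε with 0 < ε ≤ ε₁ pointwise, K_ε̄ is locally recurrent for Σ_ε on U₁ and E ∖ K_ε̄ is locally recurrent for Σ⁻_ε on U₁. Let δ : E → ℝ be continuous with δ > 0 pointwise such that, writing K_{ε̄,δ} := ⋃_{x ∈ K_ε̄} Metric.closedBall x (δ x), one has closure K_{ε̄,δ} ∖ interior K_ε̄ ⊆ interior U₁ and, for every continuous ε with 0 < ε ≤ ε₁ pointwise, K_{ε̄,δ} is locally recurrent for Σ_ε on U₁ and E ∖ K_{ε̄,δ} is locally recurrent for Σ⁻_ε on U₁. Then there exists a continuous ρ_o : E → ℝ with ρ_o > 0 pointwise such that, writing K' := {y ∈ E : ∃ t ≥ 0 and a solution ψ of Σ_{ε₁} on [0,t]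 with ψ(0) ∈ ⋃_{x ∈ K_ε̄} Metric.closedBall x (ρ_o x) and ψ(t) = y}: (1) closure K' ⊆ interior K_{ε̄,δ}, and Metric.closedBall x (ρ_o x) ∩ closure K' = ∅ for every x ∉ interior K_{ε̄,δ}; (2) there exists a closed set Û₁ ⊆ interior U₁ with closure K_{ε̄,δ} ∖ interior K_ε̄ ⊆ interior Û₁ and Metric.closedBall x (ρ_o x) ⊆ U₁ for every x ∈ Û₁; and (3) for every continuous ε : E → ℝ with 0 < ε(x) ≤ ε₂(x) for all x: K' is locally recurrent for Σ_ε on U₁; E ∖ K' is locally recurrent for Σ⁻_ε on U₁; closure K' is forward contractive for Σ_ε; E ∖ interior K' is forward contractive for Σ⁻_ε; every solution of Σ_ε on [0,T] starting in interior K' avoids frontier K' for all t ∈ (0,T]; and every solution of Σ⁻_ε on [0,T] starting in E ∖ closure K' avoids frontier K' for all t ∈ (0,T]. -/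
open MeasureTheory Set Pointwise Topology

noncomputable section

section Lemma12Aux

variable {n : ℕ}

/-! ### Basic facts about solutions -/

private lemma li_ii {g : ℝ → Euc n} (hg : LocallyIntegrable g volume) (a b : ℝ) :
    IntervalIntegrable g volume a b :=
  (hg.integrableOn_isCompact isCompact_uIcc).intervalIntegrable

private lemma sol_unpack {F : Euc n → Set (Euc n)} {ε : Euc n → ℝ} {T : ℝ} (hT : 0 ≤ T)
    {φ : ℝ → Euc n} (h : IsSolution F ε (Icc 0 T) φ) :
    ∃ g : ℝ → Euc n, LocallyIntegrable g volume ∧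
      (∀ t ∈ Icc 0 T, φ t = φ 0 + ∫ s in (0:ℝ)..t, g s) ∧
      ∀ᵐ s ∂(volume : Measure ℝ), s ∈ Icc 0 T →
        g s ∈ F (φ s) + Metric.closedBall 0 (ε (φ s)) := by
  obtain ⟨g, hg, heq, hae⟩ := h
  exact ⟨g, hg, fun t ht => heq 0 ⟨le_refl 0, hT⟩ t ht, hae⟩

private lemma sol_pack {F : Euc n → Set (Euc n)} {ε : Euc n → ℝ} {T : ℝ}
    {φ g : ℝ → Euc n} (hg : LocallyIntegrable g volume)
    (heq : ∀ t ∈ Icc 0 T, φ t = φ 0 + ∫ s in (0:ℝ)..t, g s)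
    (hae : ∀ᵐ s ∂(volume : Measure ℝ), s ∈ Icc 0 T →
        g s ∈ F (φ s) + Metric.closedBall 0 (ε (φ s))) :
    IsSolution F ε (Icc 0 T) φ := by
  refine ⟨g, hg, fun t₀ ht₀ t ht => ?_, hae⟩
  have h1 := heq t₀ ht₀
  have h2 := heq t ht
  have h3 := intervalIntegral.integral_add_adjacent_intervals
    (li_ii hg 0 t₀) (li_ii hg t₀ t)
  rw [h2, h1, ← h3]; abel

private lemma sol_mono {F : Euc n → Set (Euc n)} {ε ε' : Euc n → ℝ} {I : Set ℝ}
    {φ : ℝ → Euc n} (h : IsSolution F ε I φ) (hle : ∀ x, ε x ≤ ε' x) :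
    IsSolution F ε' I φ := by
  obtain ⟨g, hg, heq, hae⟩ := h
  refine ⟨g, hg, heq, ?_⟩
  filter_upwards [hae] with s hs hsI
  obtain ⟨w, hw, e, he, hwe⟩ := Set.mem_add.1 (hs hsI)
  exact Set.mem_add.2 ⟨w, hw, e, Metric.closedBall_subset_closedBall (hle _) he, hwe⟩

private lemma sol_restrict {F : Euc n → Set (Euc n)} {ε : Euc n → ℝ} {I J : Set ℝ}
    {φ : ℝ → Euc n} (h : IsSolution F ε J φ) (hIJ : I ⊆ J) : IsSolution F ε I φ := by
  obtain ⟨g, hg, heq, hae⟩ := h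
  refine ⟨g, hg, fun t₀ ht₀ t ht => heq t₀ (hIJ ht₀) t (hIJ ht), ?_⟩
  filter_upwards [hae] with s hs hsI
  exact hs (hIJ hsI)

private lemma sol_continuousOn {T : ℝ} {φ g : ℝ → Euc n}
    (hg : LocallyIntegrable g volume)
    (heq : ∀ t ∈ Icc 0 T, φ t = φ 0 + ∫ s in (0:ℝ)..t, g s) :
    ContinuousOn φ (Icc 0 T) := by
  have hc : Continuous fun t => φ 0 + ∫ s in (0:ℝ)..t, g s :=
    continuous_const.add (intervalIntegral.continuous_primitive (fun a b => li_ii hg a b) 0)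
  exact hc.continuousOn.congr heq

/-! ### Locally integrable transformations -/

private lemma li_comp_homeo {g : ℝ → Euc n} (hg : LocallyIntegrable g volume) (e : ℝ ≃ₜ ℝ)
    (he : Measure.map e (volume : Measure ℝ) = volume) :
    LocallyIntegrable (fun s => g (e s)) volume := by
  have h := (locallyIntegrable_map_homeomorph e (f := g) (μ := (volume : Measure ℝ)))
  rw [he] at h
  exact h.1 hg

private lemma li_comp_add {g : ℝ → Euc n} (hg : LocallyIntegrable g volume) (c : ℝ) :
    LocallyIntegrable (fun s => g (s + c)) volume := by
  have he : Measure.map (Homeomorph.addRight c) (volume : Measure ℝ) = volume :=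
    (measurePreserving_add_right (volume : Measure ℝ) c).map_eq
  exact li_comp_homeo hg (Homeomorph.addRight c) he

private lemma li_comp_sub_left {g : ℝ → Euc n} (hg : LocallyIntegrable g volume) (c : ℝ) :
    LocallyIntegrable (fun s => g (c - s)) volume := by
  have he : Measure.map (Homeomorph.subLeft c) (volume : Measure ℝ) = volume :=
    (Measure.measurePreserving_sub_left (volume : Measure ℝ) c).map_eq
  exact li_comp_homeo hg (Homeomorph.subLeft c) he

private lemma li_piecewise {g₁ g₂ : ℝ → Euc n} (h₁ : LocallyIntegrable g₁ volume)
    (h₂ : LocallyIntegrable g₂ volume) (c : ℝ) :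
    LocallyIntegrable (fun s => if s ≤ c then g₁ s else g₂ s) volume := by
  have hfe : (fun s => if s ≤ c then g₁ s else g₂ s)
      = (fun s => (Iic c).indicator g₁ s + (Ioi c).indicator g₂ s) := by
    funext s
    by_cases h : s ≤ c
    · rw [Set.indicator_of_mem (by exact h) g₁, Set.indicator_of_notMem (by simpa using h) g₂,
        if_pos h, add_zero]
    · rw [Set.indicator_of_notMem (by simpa using h) g₁,
        Set.indicator_of_mem (by simpa using lt_of_not_ge h) g₂, if_neg h, zero_add]
  rw [hfe]
  exact (h₁.indicator measurableSet_Iic).add (h₂.indicator measurableSet_Ioi)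

private lemma ae_comp_add {p : ℝ → Prop} (h : ∀ᵐ s ∂(volume : Measure ℝ), p s) (c : ℝ) :
    ∀ᵐ s ∂(volume : Measure ℝ), p (s + c) :=
  (measurePreserving_add_right (volume : Measure ℝ) c).quasiMeasurePreserving.ae h

private lemma ae_comp_sub_right {p : ℝ → Prop} (h : ∀ᵐ s ∂(volume : Measure ℝ), p s) (c : ℝ) :
    ∀ᵐ s ∂(volume : Measure ℝ), p (s - c) :=
  (measurePreserving_sub_right (volume : Measure ℝ) c).quasiMeasurePreserving.ae h

private lemma ae_comp_sub_left {p : ℝ → Prop} (h : ∀ᵐ s ∂(volume : Measure ℝ), p s) (c : ℝ) :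
    ∀ᵐ s ∂(volume : Measure ℝ), p (c - s) :=
  (Measure.measurePreserving_sub_left (volume : Measure ℝ) c).quasiMeasurePreserving.ae h

end Lemma12Aux
section Lemma12Aux2

variable {n : ℕ}

private lemma sol_concat {F : Euc n → Set (Euc n)} {ε : Euc n → ℝ} {t₁ t₂ : ℝ}
    (h₁ : 0 ≤ t₁) (h₂ : 0 ≤ t₂) {φ ψ : ℝ → Euc n}
    (s₁ : IsSolution F ε (Icc 0 t₁) φ) (s₂ : IsSolution F ε (Icc 0 t₂) ψ)
    (hj : ψ 0 = φ t₁) :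
    ∃ χ : ℝ → Euc n, IsSolution F ε (Icc 0 (t₁ + t₂)) χ ∧ χ 0 = φ 0 ∧ χ (t₁ + t₂) = ψ t₂ := by
  obtain ⟨g₁, hg₁, he₁, ha₁⟩ := sol_unpack h₁ s₁
  obtain ⟨g₂, hg₂, he₂, ha₂⟩ := sol_unpack h₂ s₂
  have hGli : LocallyIntegrable (fun s => if s ≤ t₁ then g₁ s else g₂ (s - t₁)) volume := by
    have h2' : LocallyIntegrable (fun s : ℝ => g₂ (s + -t₁)) volume := li_comp_add hg₂ (-t₁)
    simpa [sub_eq_add_neg] using li_piecewise hg₁ h2' t₁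
  refine ⟨fun s => if s ≤ t₁ then φ s else ψ (s - t₁), ?_, by simp [h₁], ?_⟩
  · apply sol_pack (g := fun s => if s ≤ t₁ then g₁ s else g₂ (s - t₁)) hGli
    · intro t ht
      have hc0 : (if (0:ℝ) ≤ t₁ then φ 0 else ψ (0 - t₁)) = φ 0 := if_pos h₁
      rw [hc0]
      by_cases hle : t ≤ t₁
      · have hint : ∫ s in (0:ℝ)..t, (if s ≤ t₁ then g₁ s else g₂ (s - t₁)) =
            ∫ s in (0:ℝ)..t, g₁ s := by
          apply intervalIntegral.integral_congr
          intro s hs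
          rw [Set.uIcc_of_le ht.1] at hs
          simp [hs.2.trans hle]
        rw [if_pos hle, hint]
        exact he₁ t ⟨ht.1, hle⟩
      · push_neg at hle
        have hsplit := intervalIntegral.integral_add_adjacent_intervals
          (li_ii hGli 0 t₁) (li_ii hGli t₁ t)
        have e1 : ∫ s in (0:ℝ)..t₁, (if s ≤ t₁ then g₁ s else g₂ (s - t₁)) =
            ∫ s in (0:ℝ)..t₁, g₁ s := by
          apply intervalIntegral.integral_congr
          intro s hs
          rw [Set.uIcc_of_le h₁] at hs
          simp [hs.2]
        have e2 : ∫ s in t₁..t, (if s ≤ t₁ then g₁ s else g₂ (s - t₁)) =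
            ∫ s in t₁..t, g₂ (s - t₁) := by
          apply intervalIntegral.integral_congr_ae
          apply Filter.Eventually.of_forall
          intro s hs
          rw [Set.uIoc_of_le hle.le] at hs
          simp [not_le.2 hs.1]
        have e3 : ∫ s in t₁..t, g₂ (s - t₁) = ∫ s in (0:ℝ)..(t - t₁), g₂ s := by
          have := intervalIntegral.integral_comp_sub_right (a := t₁) (b := t) (f := g₂) t₁
          simpa using this
        have h4 : ψ (t - t₁) = φ 0 + ((∫ s in (0:ℝ)..t₁, g₁ s) + ∫ s in (0:ℝ)..(t - t₁), g₂ s) := by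
          rw [he₂ (t - t₁) ⟨by linarith, by linarith [ht.2]⟩, hj,
            he₁ t₁ ⟨h₁, le_refl t₁⟩]
          abel
        rw [if_neg (not_le.2 hle), h4, ← hsplit, e1, e2, e3]
    · have ha₂' := ae_comp_sub_right (p := fun s => s ∈ Icc 0 t₂ →
        g₂ s ∈ F (ψ s) + Metric.closedBall 0 (ε (ψ s))) ha₂ t₁
      filter_upwards [ha₁, ha₂'] with s hs1 hs2 hsI
      by_cases hle : s ≤ t₁
      · simpa [hle] using hs1 ⟨hsI.1, hle⟩
      · push_neg at hle
        have := hs2 ⟨by linarith, by linarith [hsI.2]⟩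
        simpa [not_le.2 hle] using this
  · show (if t₁ + t₂ ≤ t₁ then φ (t₁ + t₂) else ψ (t₁ + t₂ - t₁)) = ψ t₂
    by_cases hle : t₁ + t₂ ≤ t₁
    · have ht₂ : t₂ = 0 := le_antisymm (by linarith) h₂
      simp [hle, ht₂, hj]
    · rw [if_neg hle, add_sub_cancel_left]

private lemma mem_reach_self {F : Euc n → Set (Euc n)} {ε : Euc n → ℝ} {S : Set (Euc n)}
    {x : Euc n} (hx : x ∈ S) : x ∈ Reach F ε S := by
  refine ⟨0, le_refl 0, fun _ => x, ⟨fun _ => 0, locallyIntegrable_const 0, ?_, ?_⟩, hx, rfl⟩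
  · intro t₀ _ t _; simp
  · have h0 : (volume : Measure ℝ) (Icc 0 0) = 0 := by simp
    have hmem := MeasureTheory.measure_eq_zero_iff_ae_notMem.1 h0
    filter_upwards [hmem] with s hs hsI
    exact absurd hsI hs

private lemma reach_extend {F : Euc n → Set (Euc n)} {ε : Euc n → ℝ} {S : Set (Euc n)}
    {y : Euc n} {T : ℝ} {ψ : ℝ → Euc n} (hy : y ∈ Reach F ε S) (hT : 0 ≤ T)
    (hψ : IsSolution F ε (Icc 0 T) ψ) (h0 : ψ 0 = y) :
    ∀ s ∈ Icc 0 T, ψ s ∈ Reach F ε S := by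
  intro s hs
  obtain ⟨t₁, ht₁, φ, hφ, hφ0, hφe⟩ := hy
  obtain ⟨χ, hχ, hχ0, hχe⟩ := sol_concat ht₁ hs.1 hφ
    (sol_restrict hψ (Icc_subset_Icc_right hs.2)) (by rw [h0, hφe])
  refine ⟨t₁ + s, add_nonneg ht₁ hs.1, χ, hχ, ?_, hχe⟩
  rw [hχ0]; exact hφ0

private lemma sol_translate {F : Euc n → Set (Euc n)} {ε : Euc n → ℝ} {a b c : ℝ}
    {φ : ℝ → Euc n} (h : IsSolution F ε (Icc a b) φ) :
    IsSolution F ε (Icc (a - c) (b - c)) (fun s => φ (s + c)) := by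
  obtain ⟨g, hg, heq, hae⟩ := h
  refine ⟨fun s => g (s + c), li_comp_add hg c, ?_, ?_⟩
  · intro t₀ ht₀ t ht
    have key := heq (t₀ + c) ⟨by linarith [ht₀.1], by linarith [ht₀.2]⟩
      (t + c) ⟨by linarith [ht.1], by linarith [ht.2]⟩
    simpa [intervalIntegral.integral_comp_add_right] using key
  · have h1 := ae_comp_add (p := fun s => s ∈ Icc a b →
      g s ∈ F (φ s) + Metric.closedBall 0 (ε (φ s))) hae c
    filter_upwards [h1] with s hs hsI
    exact hs ⟨by linarith [hsI.1], by linarith [hsI.2]⟩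

private lemma sol_reverse {F : Euc n → Set (Euc n)} {ε : Euc n → ℝ} {T t : ℝ}
    {ψ : ℝ → Euc n} (h : IsSolution (fun x => -F x) ε (Icc 0 T) ψ) (ht : t ∈ Icc 0 T) :
    IsSolution F ε (Icc 0 t) (fun s => ψ (t - s)) := by
  obtain ⟨g, hg, heq, hae⟩ := h
  refine ⟨fun s => -g (t - s), (li_comp_sub_left hg t).neg, ?_, ?_⟩
  · intro t₀ ht₀ u hu
    have key := heq (t - t₀) ⟨by linarith [ht₀.2], by linarith [ht.2, ht₀.1]⟩
      (t - u) ⟨by linarith [hu.2], by linarith [ht.2, hu.1]⟩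
    have e2 : ∫ s in t₀..u, g (t - s) = ∫ s in (t-u)..(t-t₀), g s :=
      intervalIntegral.integral_comp_sub_left g t
    have e3 : ∫ s in (t-u)..(t-t₀), g s = -∫ s in (t-t₀)..(t-u), g s :=
      intervalIntegral.integral_symm _ _
    have e1 : ∫ s in t₀..u, -g (t - s) = -∫ s in t₀..u, g (t - s) :=
      intervalIntegral.integral_neg
    show ψ (t - u) = ψ (t - t₀) + ∫ s in t₀..u, -g (t - s)
    rw [key, e1, e2, e3, neg_neg]
  · have h1 := ae_comp_sub_left (p := fun s => s ∈ Icc 0 T →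
      g s ∈ (fun x => -F x) (ψ s) + Metric.closedBall 0 (ε (ψ s))) hae t
    filter_upwards [h1] with s hs hsI
    have hmem := hs ⟨by linarith [hsI.2], by linarith [ht.2, hsI.1]⟩
    obtain ⟨w, hw, e, he, hwe⟩ := Set.mem_add.1 hmem
    refine Set.mem_add.2 ⟨-w, Set.mem_neg.1 (by simpa using hw), -e, ?_, ?_⟩
    · simpa [Metric.mem_closedBall, dist_zero_right] using
        (by simpa [Metric.mem_closedBall, dist_zero_right] using he : ‖e‖ ≤ ε (ψ (t - s)))
    · rw [← neg_add, hwe]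

end Lemma12Aux2
section Lemma12Aux3

variable {n : ℕ}

private lemma unif_cont {f : Euc n → ℝ} (hf : Continuous f) {Q : Set (Euc n)}
    (hQ : IsCompact Q) {r : ℝ} (hr : 0 < r) :
    ∃ η > 0, ∀ p ∈ Q, ∀ q ∈ Q, dist p q ≤ η → |f p - f q| ≤ r := by
  obtain ⟨d, hd, h⟩ := Metric.uniformContinuousOn_iff.1
    (hQ.uniformContinuousOn_of_continuous hf.continuousOn) r hr
  refine ⟨d/2, by linarith, fun p hp q hq hpq => ?_⟩
  have := h p hp q hq (lt_of_le_of_lt hpq (by linarith))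
  rw [Real.dist_eq] at this
  exact this.le

private lemma ulsc {F : Euc n → Set (Euc n)} (hUSC : USC F) (hLSC : LSC F)
    (hVal : NCCValues F) {P : Set (Euc n)} (hP : IsCompact P) {r : ℝ} (hr : 0 < r) :
    ∃ η > 0, ∀ p ∈ P, ∀ y : Euc n, dist y p ≤ η → ∀ w ∈ F p, ∃ w' ∈ F y, ‖w' - w‖ ≤ r := by
  -- pointwise uniform lower semicontinuity
  have h1 : ∀ q : Euc n, ∃ d > 0, ∀ y : Euc n, dist y q < d → ∀ v ∈ F q,
      ∃ w' ∈ F y, ‖w' - v‖ ≤ r/2 := by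
    intro q
    have hv : ∀ v : Euc n, ∃ d, 0 < d ∧ (v ∈ F q → ∀ y : Euc n, ‖y - q‖ < d →
        ∃ w ∈ F y, ‖w - v‖ ≤ r/4) := by
      intro v
      by_cases hvF : v ∈ F q
      · obtain ⟨d, hd, h⟩ := hLSC q v hvF (r/4) (by linarith)
        exact ⟨d, hd, fun _ => h⟩
      · exact ⟨1, one_pos, fun h => absurd h hvF⟩
    choose D hDpos hDprop using hv
    have hcov : F q ⊆ ⋃ v : F q, Metric.ball (v : Euc n) (r/4) := by
      intro w hw
      exact Set.mem_iUnion.2 ⟨⟨w, hw⟩, Metric.mem_ball_self (by linarith)⟩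
    obtain ⟨t, ht⟩ := (hVal q).2.1.elim_finite_subcover
      (fun v : F q => Metric.ball (v : Euc n) (r/4)) (fun v => Metric.isOpen_ball) hcov
    have htne : t.Nonempty := by
      obtain ⟨w, hw⟩ := (hVal q).1
      obtain ⟨v, hvt, _⟩ := Set.mem_iUnion₂.1 (ht hw)
      exact ⟨v, hvt⟩
    refine ⟨t.inf' htne (fun v => D (v : Euc n)), ?_, ?_⟩
    · show (0:ℝ) < t.inf' htne fun v => D (v : Euc n)
      rw [Finset.lt_inf'_iff]
      exact fun v _ => hDpos _
    · intro y hy v' hv'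
      obtain ⟨v, hvt, hvb⟩ := Set.mem_iUnion₂.1 (ht hv')
      have hyd : ‖y - q‖ < D (v : Euc n) := by
        rw [← dist_eq_norm]
        exact lt_of_lt_of_le hy (Finset.inf'_le _ hvt)
      obtain ⟨w', hw', hww'⟩ := hDprop (v : Euc n) v.2 y hyd
      refine ⟨w', hw', ?_⟩
      have hb : ‖v' - (v : Euc n)‖ < r/4 := by
        rw [← dist_eq_norm]; exact Metric.mem_ball.1 hvb
      calc ‖w' - v'‖ = ‖(w' - (v:Euc n)) + ((v:Euc n) - v')‖ := by
            rw [sub_add_sub_cancel]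
        _ ≤ ‖w' - (v:Euc n)‖ + ‖(v:Euc n) - v'‖ := norm_add_le _ _
        _ ≤ r/4 + r/4 := add_le_add hww' (by rw [norm_sub_rev]; exact hb.le)
        _ = r/2 := by ring
  -- combine with usc
  have h2 : ∀ q : Euc n, ∃ d > 0,
      (∀ p : Euc n, dist p q < d → F p ⊆ {z | ∃ v ∈ F q, ‖z - v‖ ≤ r/4}) ∧
      (∀ y : Euc n, dist y q < d → ∀ v ∈ F q, ∃ w' ∈ F y, ‖w' - v‖ ≤ r/2) := by
    intro q
    obtain ⟨d1, hd1, hu⟩ := hUSC q (r/4) (by linarith)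
    obtain ⟨d2, hd2, hl⟩ := h1 q
    refine ⟨min d1 d2, lt_min hd1 hd2, fun p hp => ?_, fun y hy => ?_⟩
    · exact hu p (by rw [← dist_eq_norm] at *; exact lt_of_lt_of_le hp (min_le_left _ _))
    · exact hl y (lt_of_lt_of_le hy (min_le_right _ _))
  choose D hDpos husc hlsc using h2
  by_cases hPe : P = ∅
  · exact ⟨1, one_pos, by simp [hPe]⟩
  · have hcov : P ⊆ ⋃ q : Euc n, Metric.ball q (D q / 2) := fun p _ =>
      Set.mem_iUnion.2 ⟨p, Metric.mem_ball_self (by linarith [hDpos p])⟩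
    obtain ⟨t, ht⟩ := hP.elim_finite_subcover (fun q : Euc n => Metric.ball q (D q / 2))
      (fun q => Metric.isOpen_ball) hcov
    have htne : t.Nonempty := by
      obtain ⟨p, hp⟩ := Set.nonempty_iff_ne_empty.2 hPe
      obtain ⟨q, hqt, _⟩ := Set.mem_iUnion₂.1 (ht hp)
      exact ⟨q, hqt⟩
    refine ⟨t.inf' htne (fun q => D q) / 4, by
      rw [gt_iff_lt, div_pos_iff]
      exact Or.inl ⟨by rw [Finset.lt_inf'_iff]; exact fun q _ => hDpos q, by norm_num⟩,
      fun p hp y hy w hw => ?_⟩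
    obtain ⟨q, hqt, hqb⟩ := Set.mem_iUnion₂.1 (ht hp)
    have hDq : t.inf' htne (fun q => D q) ≤ D q := Finset.inf'_le _ hqt
    have hpq : dist p q < D q / 2 := Metric.mem_ball.1 hqb
    have hyq : dist y q < D q := by
      calc dist y q ≤ dist y p + dist p q := dist_triangle _ _ _
        _ < D q / 4 + D q / 2 := add_lt_add_of_le_of_lt (le_trans hy (by linarith)) hpq
        _ < D q := by linarith [hDpos q]
    obtain ⟨v, hv, hwv⟩ := husc q p (by linarith [hpq, hDpos q]) hw
    obtain ⟨w', hw', hwv'⟩ := hlsc q y hyq v hv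
    refine ⟨w', hw', ?_⟩
    calc ‖w' - w‖ = ‖(w' - v) + (v - w)‖ := by rw [sub_add_sub_cancel]
      _ ≤ ‖w' - v‖ + ‖v - w‖ := norm_add_le _ _
      _ ≤ r/2 + r/4 := add_le_add hwv' (by rw [norm_sub_rev]; exact hwv)
      _ ≤ r := by linarith

private lemma sol_shift {F : Euc n → Set (Euc n)} {ε ε' : Euc n → ℝ} {T : ℝ} (hT : 0 < T)
    {φ : ℝ → Euc n} (hsol : IsSolution F ε (Icc 0 T) φ) (a b : Euc n) (r : ℝ)
    (hineq : ∀ s ∈ Icc 0 T,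
      ε (φ s) + ‖b - a‖ / T + r ≤ ε' (φ s + (1 - s / T) • a + (s / T) • b))
    (hlsc : ∀ s ∈ Icc 0 T, ∀ w ∈ F (φ s),
      ∃ w' ∈ F (φ s + (1 - s / T) • a + (s / T) • b), ‖w' - w‖ ≤ r) :
    IsSolution F ε' (Icc 0 T) (fun s => φ s + (1 - s / T) • a + (s / T) • b) := by
  obtain ⟨g, hg, heq, hae⟩ := sol_unpack hT.le hsol
  apply sol_pack (g := fun s => g s + T⁻¹ • (b - a))
    (hg.add (locallyIntegrable_const _))
  · intro t htI
    show φ t + (1 - t / T) • a + (t / T) • b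
        = (φ 0 + (1 - 0 / T) • a + (0 / T) • b) + ∫ s in (0:ℝ)..t, (g s + T⁻¹ • (b - a))
    have e1 : ∫ s in (0:ℝ)..t, (g s + T⁻¹ • (b - a))
        = (∫ s in (0:ℝ)..t, g s) + t • (T⁻¹ • (b - a)) := by
      rw [intervalIntegral.integral_add (li_ii hg 0 t) intervalIntegrable_const,
        intervalIntegral.integral_const, sub_zero]
    rw [e1, heq t htI]
    simp only [zero_div, sub_zero, one_smul, zero_smul, add_zero]
    have e2 : t • (T⁻¹ • (b - a)) = (t / T) • b - (t / T) • a := by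
      rw [smul_smul, ← div_eq_mul_inv, smul_sub]
    rw [e2, sub_smul, one_smul]
    abel
  · filter_upwards [hae] with s hsae hsI
    obtain ⟨w, hw, e, he, hwe⟩ := Set.mem_add.1 (hsae hsI)
    obtain ⟨w', hw', hww'⟩ := hlsc s hsI w hw
    refine Set.mem_add.2 ⟨w', hw', (w - w') + e + T⁻¹ • (b - a), ?_, by rw [← hwe]; abel⟩
    rw [Metric.mem_closedBall, dist_zero_right]
    have h1 : ‖w - w'‖ ≤ r := by rw [norm_sub_rev]; exact hww'
    have h2 : ‖e‖ ≤ ε (φ s) := by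
      rw [Metric.mem_closedBall, dist_zero_right] at he; exact he
    have h3 : ‖T⁻¹ • (b - a)‖ = ‖b - a‖ / T := by
      rw [norm_smul, norm_inv, Real.norm_eq_abs, abs_of_pos hT, div_eq_inv_mul]
    calc ‖(w - w') + e + T⁻¹ • (b - a)‖
        ≤ ‖w - w'‖ + ‖e‖ + ‖T⁻¹ • (b - a)‖ := norm_add₃_le
      _ ≤ r + ε (φ s) + ‖b - a‖ / T := by rw [h3]; exact add_le_add (add_le_add h1 h2) (le_refl _)
      _ ≤ ε' (φ s + (1 - s / T) • a + (s / T) • b) := by linarith [hineq s hsI]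

end Lemma12Aux3
section Lemma12Aux4

variable {n : ℕ}

private lemma escape {F : Euc n → Set (Euc n)} {ε : Euc n → ℝ} {x : Euc n}
    {r₀ M t τ : ℝ} (hr₀ : 0 < r₀) (ht : 0 ≤ t) (hτ : 0 ≤ τ) (hMpos : 0 < M)
    {ψ g : ℝ → Euc n} (hg : LocallyIntegrable g volume)
    (heq : ∀ s ∈ Icc 0 t, ψ s = ψ 0 + ∫ u in (0:ℝ)..s, g u)
    (hae : ∀ᵐ s ∂(volume : Measure ℝ), s ∈ Icc 0 t →
      g s ∈ F (ψ s) + Metric.closedBall 0 (ε (ψ s)))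
    (hdist : dist (ψ 0) x ≤ r₀ / 4)
    (hM : ∀ p ∈ Metric.closedBall x r₀, ∀ w ∈ F p, ‖w‖ + ε p ≤ M)
    (hMτ : M * τ ≤ r₀ / 8) :
    ∀ s ∈ Icc 0 (min τ t), dist (ψ s) (ψ 0) ≤ M * s := by
  have hcont : ContinuousOn ψ (Icc 0 t) := sol_continuousOn hg heq
  have speed : ∀ s ∈ Icc 0 (min τ t),
      (∀ u ∈ Icc 0 s, ψ u ∈ Metric.closedBall x r₀) → dist (ψ s) (ψ 0) ≤ M * s := by
    intro s hsI hin
    have hs0 : 0 ≤ s := hsI.1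
    have hst : s ≤ t := le_trans hsI.2 (min_le_right τ t)
    have hb : ∀ᵐ u ∂(volume : Measure ℝ).restrict (Set.uIoc 0 s),
        ‖g u‖ ≤ (fun _ : ℝ => M) u := by
      have hmem1 : ∀ᵐ u ∂(volume : Measure ℝ).restrict (Set.uIoc 0 s), u ∈ Set.uIoc 0 s :=
        MeasureTheory.ae_restrict_mem measurableSet_uIoc
      have hmem2 := MeasureTheory.ae_restrict_of_ae
        (μ := (volume : Measure ℝ)) (s := Set.uIoc 0 s) hae
      filter_upwards [hmem1, hmem2] with u hu hval
      rw [Set.uIoc_of_le hs0] at hu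
      have huI : u ∈ Icc 0 t := ⟨hu.1.le, hu.2.trans hst⟩
      obtain ⟨w, hw, e, he, hwe⟩ := Set.mem_add.1 (hval huI)
      have hψu : ψ u ∈ Metric.closedBall x r₀ := hin u ⟨hu.1.le, hu.2⟩
      have hwb := hM _ hψu w hw
      have he' : ‖e‖ ≤ ε (ψ u) := by
        rw [Metric.mem_closedBall, dist_zero_right] at he; exact he
      calc ‖g u‖ = ‖w + e‖ := by rw [hwe]
        _ ≤ ‖w‖ + ‖e‖ := norm_add_le _ _
        _ ≤ M := by linarith
    have hde : dist (ψ s) (ψ 0) = ‖∫ u in (0:ℝ)..s, g u‖ := by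
      rw [heq s ⟨hs0, hst⟩, dist_eq_norm]
      simp
    rw [hde]
    have hnorm := intervalIntegral.norm_integral_le_abs_of_norm_le
      (f := g) (a := 0) (b := s) (μ := volume) hb intervalIntegrable_const
    rw [intervalIntegral.integral_const, sub_zero, smul_eq_mul,
      abs_of_nonneg (by positivity)] at hnorm
    linarith [hnorm]
  have hu₀0 : 0 ≤ min τ t := le_min hτ ht
  have hall : ∀ s ∈ Icc 0 (min τ t), ψ s ∈ Metric.closedBall x (r₀ / 2) := by
    by_contra hcon
    push_neg at hcon
    obtain ⟨s₁, hs₁, hout⟩ := hcon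
    have hclosed : IsClosed {s : ℝ | s ∈ Icc 0 (min τ t) ∧ r₀ / 2 ≤ dist (ψ s) x} := by
      have : {s : ℝ | s ∈ Icc 0 (min τ t) ∧ r₀ / 2 ≤ dist (ψ s) x}
          = Icc 0 (min τ t) ∩ ψ ⁻¹' {p : Euc n | r₀ / 2 ≤ dist p x} := rfl
      rw [this]
      refine ContinuousOn.preimage_isClosed_of_isClosed
        (hcont.mono (Icc_subset_Icc_right (min_le_right τ t))) isClosed_Icc ?_
      exact isClosed_le continuous_const (continuous_id.dist continuous_const)
    have hne : {s : ℝ | s ∈ Icc 0 (min τ t) ∧ r₀ / 2 ≤ dist (ψ s) x}.Nonempty := by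
      refine ⟨s₁, hs₁, ?_⟩
      have := Metric.mem_closedBall.not.1 hout
      push_neg at this
      exact this.le
    have hbdd : BddBelow {s : ℝ | s ∈ Icc 0 (min τ t) ∧ r₀ / 2 ≤ dist (ψ s) x} :=
      ⟨0, fun s hsmem => hsmem.1.1⟩
    set s₂ := sInf {s : ℝ | s ∈ Icc 0 (min τ t) ∧ r₀ / 2 ≤ dist (ψ s) x} with hs₂def
    have hs₂ : s₂ ∈ {s : ℝ | s ∈ Icc 0 (min τ t) ∧ r₀ / 2 ≤ dist (ψ s) x} :=
      hclosed.csInf_mem hne hbdd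
    have hs₂pos : 0 < s₂ := by
      rcases lt_or_eq_of_le hs₂.1.1 with h | h
      · exact h
      · exfalso
        have := hs₂.2
        rw [← h] at this
        linarith [hdist, this, hr₀]
    have hlt : ∀ u, u ∈ Icc 0 (min τ t) → u < s₂ → dist (ψ u) x < r₀ / 2 := by
      intro u hu hult
      by_contra hge
      push_neg at hge
      exact absurd (csInf_le hbdd ⟨hu, hge⟩) (not_le.2 hult)
    have hend : ∀ u ∈ Icc 0 s₂, ψ u ∈ Metric.closedBall x r₀ := by
      intro u hu
      rcases lt_or_eq_of_le hu.2 with h | h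
      · have := hlt u ⟨hu.1, le_trans hu.2 hs₂.1.2⟩ h
        rw [Metric.mem_closedBall]
        linarith
      · have hD : IsClosed {s : ℝ | s ∈ Icc 0 (min τ t) ∧ dist (ψ s) x ≤ r₀ / 2} := by
          have : {s : ℝ | s ∈ Icc 0 (min τ t) ∧ dist (ψ s) x ≤ r₀ / 2}
              = Icc 0 (min τ t) ∩ ψ ⁻¹' {p : Euc n | dist p x ≤ r₀ / 2} := rfl
          rw [this]
          refine ContinuousOn.preimage_isClosed_of_isClosed
            (hcont.mono (Icc_subset_Icc_right (min_le_right τ t))) isClosed_Icc ?_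
          exact isClosed_le (continuous_id.dist continuous_const) continuous_const
        have hsub : Ico 0 s₂ ⊆ {s : ℝ | s ∈ Icc 0 (min τ t) ∧ dist (ψ s) x ≤ r₀ / 2} := by
          intro u' hu'
          have hu'I : u' ∈ Icc 0 (min τ t) := ⟨hu'.1, le_trans hu'.2.le hs₂.1.2⟩
          exact ⟨hu'I, (hlt u' hu'I hu'.2).le⟩
        have hmem : s₂ ∈ {s : ℝ | s ∈ Icc 0 (min τ t) ∧ dist (ψ s) x ≤ r₀ / 2} := by
          have h1 : s₂ ∈ closure (Ico 0 s₂) := by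
            rw [closure_Ico hs₂pos.ne]
            exact ⟨hs₂pos.le, le_refl s₂⟩
          exact hD.closure_subset ((closure_mono hsub) h1)
        rw [← h] at hmem
        rw [Metric.mem_closedBall]
        linarith [hmem.2]
    have hspeed := speed s₂ hs₂.1 hend
    have hs₂τ : s₂ ≤ τ := le_trans hs₂.1.2 (min_le_left τ t)
    have : dist (ψ s₂) x ≤ M * s₂ + r₀ / 4 :=
      le_trans (dist_triangle (ψ s₂) (ψ 0) x) (add_le_add hspeed hdist)
    have hMs₂ : M * s₂ ≤ M * τ := mul_le_mul_of_nonneg_left hs₂τ hMpos.le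
    linarith [hs₂.2]
  intro s hsI
  refine speed s hsI (fun u hu => ?_)
  have := hall u ⟨hu.1, le_trans hu.2 hsI.2⟩
  exact Metric.closedBall_subset_closedBall (by linarith) this

private lemma minorant (Φ : Euc n → ℝ → Prop)
    (hmono : ∀ x ρ ρ', Φ x ρ → 0 < ρ' → ρ' ≤ ρ → Φ x ρ')
    (hloc : ∀ x, ∃ r > 0, ∃ ρ > 0, ∀ y, dist y x ≤ r → Φ y ρ) :
    ∃ ρo : Euc n → ℝ, Continuous ρo ∧ (∀ x, 0 < ρo x) ∧ ∀ x, Φ x (ρo x) := by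
  classical
  set M : Euc n → Set ℝ := fun x =>
    {m : ℝ | (0 < m ∧ m ≤ 1) ∧ ∀ y ∈ Metric.closedBall x m, Φ y m} with hM
  set g : Euc n → ℝ := fun x => sSup (insert 0 (M x)) with hg
  have hbdd : ∀ x, BddAbove (insert 0 (M x)) := by
    intro x
    refine ⟨1, ?_⟩
    rintro m hm
    rcases Set.mem_insert_iff.1 hm with rfl | hm
    · norm_num
    · exact hm.1.2
  have hg0 : ∀ x, 0 ≤ g x := fun x => le_csSup (hbdd x) (Set.mem_insert 0 _)
  have hkey : ∀ x y : Euc n, g x ≤ g y + dist x y := by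
    intro x y
    apply csSup_le ⟨0, Set.mem_insert 0 _⟩
    rintro m hm
    rcases Set.mem_insert_iff.1 hm with rfl | hm
    · have := hg0 y
      have := dist_nonneg (x := x) (y := y)
      linarith
    · rcases le_or_gt m (dist x y) with h | h
      · have := hg0 y
        linarith
      · have hmem : m - dist x y ∈ M y := by
          refine ⟨⟨by linarith, by linarith [hm.1.2, dist_nonneg (x := x) (y := y)]⟩, fun z hz => ?_⟩
          refine hmono z m (m - dist x y) (hm.2 z ?_) (by linarith) (by linarith [dist_nonneg (x := x) (y := y)])
          rw [Metric.mem_closedBall] at hz ⊢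
          calc dist z x ≤ dist z y + dist y x := dist_triangle _ _ _
            _ ≤ (m - dist x y) + dist x y := by rw [dist_comm y x]; exact add_le_add hz (le_refl _)
            _ = m := by ring
        have := le_csSup (hbdd y) (Set.mem_insert_of_mem 0 hmem)
        linarith
  have hlip : Continuous g := by
    refine LipschitzWith.continuous (K := 1) ?_
    apply LipschitzWith.of_dist_le_mul
    intro x y
    rw [Real.dist_eq, NNReal.coe_one, one_mul, abs_sub_le_iff]
    constructor
    · have := hkey x y
      linarith
    · have := hkey y x
      rw [dist_comm y x] at this
      linarith
  have hgpos : ∀ x, 0 < g x := by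
    intro x
    obtain ⟨r, hr, ρ, hρ, h⟩ := hloc x
    set m := min r (min ρ 1) with hm'
    have hmpos : 0 < m := lt_min hr (lt_min hρ one_pos)
    have hmem : m ∈ M x := by
      refine ⟨⟨hmpos, le_trans (min_le_right _ _) (min_le_right _ _)⟩, fun y hy => ?_⟩
      refine hmono y ρ m (h y ?_) hmpos (le_trans (min_le_right _ _) (min_le_left _ _))
      exact le_trans hy (min_le_left _ _)
    exact lt_of_lt_of_le hmpos (le_csSup (hbdd x) (Set.mem_insert_of_mem 0 hmem))
  refine ⟨fun x => g x / 2, hlip.div_const 2, fun x => by linarith [hgpos x], fun x => ?_⟩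
  have hlt : g x / 2 < sSup (insert 0 (M x)) := by
    have := hgpos x
    rw [hg] at *
    linarith
  obtain ⟨m, hm, hgm⟩ := exists_lt_of_lt_csSup ⟨0, Set.mem_insert 0 _⟩ hlt
  rcases Set.mem_insert_iff.1 hm with rfl | hm
  · exfalso; linarith [hgpos x]
  · refine hmono x m (g x / 2) (hm.2 x (Metric.mem_closedBall_self hm.1.1.le))
      (by linarith [hgpos x]) hgm.le

private lemma closure_infl {K : Set (Euc n)} {δ : Euc n → ℝ} (hδ : Continuous δ)
    (hδpos : ∀ x, 0 < δ x) :
    closure (⋃ x ∈ K, Metric.closedBall x (δ x / 2)) ⊆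
      interior (⋃ x ∈ K, Metric.closedBall x (δ x)) := by
  intro z hz
  have hopen : IsOpen {y : Euc n | δ z / 2 < δ y} := isOpen_lt continuous_const hδ
  obtain ⟨rr, hrr, hball⟩ := Metric.isOpen_iff.1 hopen z (by
    show δ z / 2 < δ z
    linarith [hδpos z])
  have hcpos : 0 < min (rr/4) (δ z / 8) := lt_min (by linarith) (by linarith [hδpos z])
  obtain ⟨h', hh', hdzh⟩ := Metric.mem_closure_iff.1 hz _ hcpos
  obtain ⟨x', hx'K, hx'b⟩ := Set.mem_iUnion₂.1 hh'
  rw [Metric.mem_closedBall] at hx'b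
  have hdzx : dist z x' ≤ min (rr/4) (δ z / 8) + δ x' / 2 :=
    le_trans (dist_triangle z h' x') (add_le_add hdzh.le hx'b)
  have hkey : dist z x' < δ x' := by
    by_cases hcase : dist z x' < rr
    · have h1 : δ z / 2 < δ x' := hball (by rw [Metric.mem_ball, dist_comm]; exact hcase)
      have h2 : min (rr/4) (δ z / 8) ≤ δ z / 8 := min_le_right _ _
      linarith
    · push_neg at hcase
      have h1 : rr ≤ min (rr/4) (δ z / 8) + δ x' / 2 := le_trans hcase hdzx
      have h2 : min (rr/4) (δ z / 8) ≤ rr/4 := min_le_left _ _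
      linarith
  have hzball : z ∈ Metric.ball x' (δ x') := Metric.mem_ball.2 hkey
  have hsub : Metric.ball x' (δ x') ⊆ ⋃ x ∈ K, Metric.closedBall x (δ x) :=
    subset_trans Metric.ball_subset_closedBall
      (Set.subset_iUnion₂ (s := fun x _ => Metric.closedBall x (δ x)) x' hx'K)
  exact interior_maximal hsub Metric.isOpen_ball hzball

end Lemma12Aux4
section Lemma12Aux5

variable {n : ℕ}

private lemma ml_local {F : Euc n → Set (Euc n)} (hUSC : USC F) (hLSC : LSC F)
    (hVal : NCCValues F) {εb ε₁ δ : Euc n → ℝ} (hεb : Continuous εb) (hε₁ : Continuous ε₁)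
    (hε₁pos : ∀ x, 0 < ε₁ x) (hgap : ∀ x, ε₁ x < εb x)
    (hδ : Continuous δ) (hδpos : ∀ x, 0 < δ x) {K : Set (Euc n)}
    (hinv : ∀ y ∈ K, ∀ T : ℝ, 0 ≤ T → ∀ χ : ℝ → Euc n,
      IsSolution F εb (Icc 0 T) χ → χ 0 = y → ∀ s ∈ Icc 0 T, χ s ∈ K)
    (x : Euc n) :
    ∃ r > 0, ∃ ρ > 0, ∀ y : Euc n, dist y x ≤ r → y ∈ K →
      ∀ t : ℝ, 0 ≤ t → ∀ ψ : ℝ → Euc n, IsSolution F ε₁ (Icc 0 t) ψ →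
        ψ 0 ∈ Metric.closedBall y ρ → ∀ s ∈ Icc 0 t,
          ψ s ∈ K ∪ Metric.closedBall y (δ y / 2) := by
  classical
  -- local bound on F near x
  obtain ⟨du, hdu, hu⟩ := hUSC x 1 one_pos
  obtain ⟨R, hR⟩ := isBounded_iff_forall_norm_le.1 ((hVal x).2.1.isBounded)
  have hR0 : 0 ≤ R := by
    obtain ⟨v₀, hv₀⟩ := (hVal x).1
    exact le_trans (norm_nonneg v₀) (hR v₀ hv₀)
  set r₀ := min 1 (du / 2) with hr₀def
  have hr₀ : 0 < r₀ := lt_min one_pos (by linarith)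
  have hcb : IsCompact (Metric.closedBall x r₀) := isCompact_closedBall x r₀
  have hcbne : (Metric.closedBall x r₀).Nonempty := ⟨x, Metric.mem_closedBall_self hr₀.le⟩
  have hFb : ∀ p ∈ Metric.closedBall x r₀, ∀ w ∈ F p, ‖w‖ ≤ R + 1 := by
    intro p hp w hw
    have hpd : ‖p - x‖ < du := by
      rw [← dist_eq_norm]
      have h1 := Metric.mem_closedBall.1 hp
      have h2 : r₀ ≤ du / 2 := min_le_right _ _
      linarith
    obtain ⟨v, hv, hwv⟩ := hu p hpd hw
    have hwe : w = v + (w - v) := by abel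
    calc ‖w‖ = ‖v + (w - v)‖ := by rw [← hwe]
      _ ≤ ‖v‖ + ‖w - v‖ := norm_add_le _ _
      _ ≤ R + 1 := add_le_add (hR v hv) hwv
  obtain ⟨pM, hpMmem, hpMmax⟩ := hcb.exists_isMaxOn hcbne hε₁.continuousOn
  set M := R + 2 + ε₁ pM with hMdef
  have hMpos : 0 < M := by
    have := hε₁pos pM
    linarith
  have hMbound : ∀ p ∈ Metric.closedBall x r₀, ∀ w ∈ F p, ‖w‖ + ε₁ p ≤ M := by
    intro p hp w hw
    have h1 := hFb p hp w hw
    have h2 : ε₁ p ≤ ε₁ pM := hpMmax hp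
    rw [hMdef]; linarith
  obtain ⟨pm, hpmmem, hpmmin⟩ := hcb.exists_isMinOn hcbne ((hεb.sub hε₁).continuousOn)
  set m₀ := εb pm - ε₁ pm with hm₀def
  have hm₀pos : 0 < m₀ := sub_pos.2 (hgap pm)
  have hm₀le : ∀ q ∈ Metric.closedBall x r₀, m₀ ≤ εb q - ε₁ q := fun q hq => hpmmin hq
  obtain ⟨η₀, hη₀pos, hη₀⟩ := ulsc hUSC hLSC hVal hcb (show (0:ℝ) < m₀/4 by linarith)
  obtain ⟨η₁, hη₁pos, hη₁⟩ := unif_cont hεb hcb (show (0:ℝ) < m₀/4 by linarith)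
  obtain ⟨pδ, hpδmem, hpδmin⟩ := hcb.exists_isMinOn hcbne hδ.continuousOn
  set δm := δ pδ with hδmdef
  have hδmpos : 0 < δm := hδpos pδ
  have hδmle : ∀ q ∈ Metric.closedBall x r₀, δm ≤ δ q := fun q hq => hpδmin hq
  set σ := min (r₀ / (8 * M)) (δm / (4 * M)) with hσdef
  have hσ : 0 < σ := lt_min (by positivity) (by positivity)
  have hMσ₁ : M * σ ≤ r₀ / 8 := by
    have h1 : σ ≤ r₀ / (8 * M) := min_le_left _ _
    calc M * σ ≤ M * (r₀ / (8 * M)) := mul_le_mul_of_nonneg_left h1 hMpos.le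
      _ = r₀ / 8 := by field_simp
  have hMσ₂ : M * σ ≤ δm / 4 := by
    have h1 : σ ≤ δm / (4 * M) := min_le_right _ _
    calc M * σ ≤ M * (δm / (4 * M)) := mul_le_mul_of_nonneg_left h1 hMpos.le
      _ = δm / 4 := by field_simp
  set ρ := min (min η₀ η₁) (min (σ * m₀ / 2) (min (δm / 4) (r₀ / 8))) with hρdef
  have hρpos : 0 < ρ := by
    refine lt_min (lt_min hη₀pos hη₁pos) (lt_min (by positivity) (lt_min ?_ ?_)) <;> positivity
  have hρη₀ : ρ ≤ η₀ := le_trans (min_le_left _ _) (min_le_left _ _)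
  have hρη₁ : ρ ≤ η₁ := le_trans (min_le_left _ _) (min_le_right _ _)
  have hρσ : ρ ≤ σ * m₀ / 2 := le_trans (min_le_right _ _) (min_le_left _ _)
  have hρδ : ρ ≤ δm / 4 := le_trans (min_le_right _ _) (le_trans (min_le_right _ _) (min_le_left _ _))
  have hρr : ρ ≤ r₀ / 8 := le_trans (min_le_right _ _) (le_trans (min_le_right _ _) (min_le_right _ _))
  refine ⟨r₀ / 8, by linarith, ρ, hρpos, ?_⟩
  intro y hyx hyK t ht ψ hψ hψ0 s hs
  obtain ⟨g, hg, heq, hae⟩ := sol_unpack ht hψ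
  have hzy : dist (ψ 0) y ≤ ρ := Metric.mem_closedBall.1 hψ0
  have hzx : dist (ψ 0) x ≤ r₀ / 4 := by
    calc dist (ψ 0) x ≤ dist (ψ 0) y + dist y x := dist_triangle _ _ _
      _ ≤ ρ + r₀ / 8 := add_le_add hzy hyx
      _ ≤ r₀ / 4 := by linarith
  have hesc := escape (F := F) (ε := ε₁) hr₀ ht hσ.le hMpos hg heq hae hzx hMbound hMσ₁
  have hyball : y ∈ Metric.closedBall x r₀ := Metric.mem_closedBall.2 (by linarith)
  have hδy : δm ≤ δ y := hδmle y hyball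
  -- points before time σ are close to y
  have hnear : ∀ s' ∈ Icc 0 (min σ t), ψ s' ∈ Metric.closedBall y (δ y / 2) := by
    intro s' hs'
    have h1 := hesc s' hs'
    have h2 : M * s' ≤ M * σ :=
      mul_le_mul_of_nonneg_left (le_trans hs'.2 (min_le_left _ _)) hMpos.le
    rw [Metric.mem_closedBall]
    calc dist (ψ s') y ≤ dist (ψ s') (ψ 0) + dist (ψ 0) y := dist_triangle _ _ _
      _ ≤ M * s' + ρ := add_le_add h1 hzy
      _ ≤ δm / 4 + δm / 4 := by have := le_trans h2 hMσ₂; linarith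
      _ ≤ δ y / 2 := by linarith
  have hfar : ∀ s' ∈ Icc 0 (min σ t), ψ s' ∈ Metric.closedBall x (r₀ / 2) := by
    intro s' hs'
    have h1 := hesc s' hs'
    have h2 : M * s' ≤ M * σ :=
      mul_le_mul_of_nonneg_left (le_trans hs'.2 (min_le_left _ _)) hMpos.le
    rw [Metric.mem_closedBall]
    calc dist (ψ s') x ≤ dist (ψ s') (ψ 0) + dist (ψ 0) x := dist_triangle _ _ _
      _ ≤ M * s' + r₀ / 4 := add_le_add h1 hzx
      _ ≤ r₀ / 8 + r₀ / 4 := by have := le_trans h2 hMσ₁; linarith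
      _ ≤ r₀ / 2 := by linarith
  by_cases htσ : t ≤ σ
  · -- short interval : everything stays near y
    right
    have : min σ t = t := min_eq_right htσ
    exact hnear s (by rw [this]; exact hs)
  · push_neg at htσ
    have hminσ : min σ t = σ := min_eq_left htσ.le
    -- shift the initial segment to start at y
    set a : Euc n := y - ψ 0 with hadef
    have hna : ‖a‖ ≤ ρ := by
      rw [hadef, ← dist_eq_norm, dist_comm]
      exact hzy
    have hψσsol : IsSolution F ε₁ (Icc 0 σ) ψ := sol_restrict hψ (Icc_subset_Icc_right htσ.le)
    have hχdist : ∀ s' ∈ Icc 0 σ,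
        dist (ψ s' + (1 - s' / σ) • a + (s' / σ) • (0 : Euc n)) (ψ s') ≤ ρ := by
      intro s' hs'
      have h01 : 0 ≤ 1 - s' / σ ∧ 1 - s' / σ ≤ 1 := by
        constructor
        · have : s' / σ ≤ 1 := (div_le_one hσ).2 hs'.2
          linarith
        · have : 0 ≤ s' / σ := div_nonneg hs'.1 hσ.le
          linarith
      have he : ψ s' + (1 - s' / σ) • a + (s' / σ) • (0 : Euc n) - ψ s'
          = (1 - s' / σ) • a := by rw [smul_zero, add_zero]; abel
      rw [dist_eq_norm, he, norm_smul, Real.norm_eq_abs, abs_of_nonneg h01.1]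
      calc (1 - s' / σ) * ‖a‖ ≤ 1 * ‖a‖ :=
            mul_le_mul_of_nonneg_right h01.2 (norm_nonneg a)
        _ = ‖a‖ := one_mul _
        _ ≤ ρ := hna
    have hψin : ∀ s' ∈ Icc 0 σ, ψ s' ∈ Metric.closedBall x (r₀ / 2) := by
      intro s' hs'
      exact hfar s' (by rw [hminσ]; exact hs')
    have hχin : ∀ s' ∈ Icc 0 σ,
        (ψ s' + (1 - s' / σ) • a + (s' / σ) • (0 : Euc n)) ∈ Metric.closedBall x r₀ := by
      intro s' hs'
      have h1 := hχdist s' hs'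
      have h2 := Metric.mem_closedBall.1 (hψin s' hs')
      rw [Metric.mem_closedBall]
      calc dist (ψ s' + (1 - s' / σ) • a + (s' / σ) • (0 : Euc n)) x
          ≤ dist (ψ s' + (1 - s' / σ) • a + (s' / σ) • (0 : Euc n)) (ψ s') + dist (ψ s') x :=
            dist_triangle _ _ _
        _ ≤ ρ + r₀ / 2 := add_le_add h1 h2
        _ ≤ r₀ := by linarith
    have hχsol := sol_shift (F := F) (ε := ε₁) (ε' := εb) hσ hψσsol a (0 : Euc n) (m₀ / 4)
      (by
        intro s' hs'
        have hψmem : ψ s' ∈ Metric.closedBall x r₀ :=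
          Metric.closedBall_subset_closedBall (by linarith) (hψin s' hs')
        have hχmem := hχin s' hs'
        have hgap' := hm₀le (ψ s') hψmem
        have hcont' := hη₁ _ hχmem _ hψmem (le_trans (hχdist s' hs') hρη₁)
        have hnb : ‖(0 : Euc n) - a‖ / σ ≤ m₀ / 2 := by
          rw [zero_sub, norm_neg]
          rw [div_le_iff₀ hσ]
          calc ‖a‖ ≤ ρ := hna
            _ ≤ σ * m₀ / 2 := hρσ
            _ = m₀ / 2 * σ := by ring
        have habs := abs_le.1 hcont'
        linarith [habs.1, habs.2])
      (by
        intro s' hs' w hw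
        have hψmem : ψ s' ∈ Metric.closedBall x r₀ :=
          Metric.closedBall_subset_closedBall (by linarith) (hψin s' hs')
        exact hη₀ (ψ s') hψmem _ (le_trans (hχdist s' hs') hρη₀) w hw)
    have hχ0 : ψ 0 + (1 - 0 / σ) • a + (0 / σ) • (0 : Euc n) = y := by
      rw [zero_div, sub_zero, one_smul, zero_smul, add_zero, hadef]
      abel
    have hχσ : ψ σ + (1 - σ / σ) • a + (σ / σ) • (0 : Euc n) = ψ σ := by
      rw [div_self hσ.ne', sub_self, zero_smul, add_zero, smul_zero, add_zero]
    have hψσK : ψ σ ∈ K := by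
      have := hinv y hyK σ hσ.le _ hχsol hχ0 σ ⟨hσ.le, le_refl σ⟩
      rwa [hχσ] at this
    have htail : IsSolution F εb (Icc 0 (t - σ)) (fun u => ψ (u + σ)) := by
      have h1 : IsSolution F ε₁ (Icc σ t) ψ :=
        sol_restrict hψ (Icc_subset_Icc hσ.le (le_refl t))
      have h2 := sol_translate (c := σ) h1
      rw [sub_self] at h2
      exact sol_mono h2 (fun q => (hgap q).le)
    have hKtail : ∀ u ∈ Icc 0 (t - σ), ψ (u + σ) ∈ K := by
      intro u hu
      exact hinv (ψ σ) hψσK (t - σ) (by linarith) _ htail (by rw [zero_add]) u hu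
    by_cases hsσ : s ≤ σ
    · right
      exact hnear s (by rw [hminσ]; exact ⟨hs.1, hsσ⟩)
    · left
      push_neg at hsσ
      have := hKtail (s - σ) ⟨by linarith, by linarith [hs.2]⟩
      rwa [sub_add_cancel] at this

end Lemma12Aux5
section Lemma12Aux6

variable {n : ℕ}

private lemma core {F : Euc n → Set (Euc n)} (hUSC : USC F) (hLSC : LSC F)
    (hVal : NCCValues F) {ε₁ ε₂ : Euc n → ℝ} (hε₁ : Continuous ε₁) (hε₂ : Continuous ε₂)
    (hgap : ∀ x, ε₂ x < ε₁ x) {S : Set (Euc n)} {ε : Euc n → ℝ}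
    (hεle : ∀ x, ε x ≤ ε₂ x) {T : ℝ} {φ : ℝ → Euc n}
    (hsol : IsSolution F ε (Icc 0 T) φ) (h0 : φ 0 ∈ closure (Reach F ε₁ S)) :
    ∀ t ∈ Ioc 0 T, φ t ∈ interior (Reach F ε₁ S) := by
  intro t htI
  have htpos : 0 < t := htI.1
  have hsolt : IsSolution F ε (Icc 0 t) φ := sol_restrict hsol (Icc_subset_Icc_right htI.2)
  obtain ⟨g, hg, heq, hae⟩ := sol_unpack htpos.le hsolt
  have hcont := sol_continuousOn hg heq
  have hP : IsCompact (φ '' Icc 0 t) := isCompact_Icc.image_of_continuousOn hcont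
  have hQ : IsCompact (Metric.cthickening 1 (φ '' Icc 0 t)) := hP.cthickening
  have hPQ : φ '' Icc 0 t ⊆ Metric.cthickening 1 (φ '' Icc 0 t) :=
    Metric.self_subset_cthickening _
  have hQne : (Metric.cthickening 1 (φ '' Icc 0 t)).Nonempty :=
    ⟨φ 0, hPQ ⟨0, ⟨le_refl 0, htpos.le⟩, rfl⟩⟩
  obtain ⟨qm, hqmmem, hqmin⟩ := hQ.exists_isMinOn hQne ((hε₁.sub hε₂).continuousOn)
  set m := ε₁ qm - ε₂ qm with hmdef
  have hmpos : 0 < m := sub_pos.2 (hgap qm)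
  have hmle : ∀ q ∈ Metric.cthickening 1 (φ '' Icc 0 t), m ≤ ε₁ q - ε₂ q :=
    fun q hq => hqmin hq
  obtain ⟨η₁, hη₁pos, hη₁⟩ := unif_cont hε₁ hQ (show (0:ℝ) < m/4 by linarith)
  obtain ⟨η₂, hη₂pos, hη₂⟩ := ulsc hUSC hLSC hVal hQ (show (0:ℝ) < m/4 by linarith)
  set η := min (min 1 (t * m / 8)) (min η₁ η₂) with hηdef
  have hηpos : 0 < η := lt_min (lt_min one_pos (by positivity)) (lt_min hη₁pos hη₂pos)
  have hη1 : η ≤ 1 := le_trans (min_le_left _ _) (min_le_left _ _)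
  have hηtm : η ≤ t * m / 8 := le_trans (min_le_left _ _) (min_le_right _ _)
  have hηη₁ : η ≤ η₁ := le_trans (min_le_right _ _) (min_le_left _ _)
  have hηη₂ : η ≤ η₂ := le_trans (min_le_right _ _) (min_le_right _ _)
  have hball : Metric.ball (φ t) (η / 2) ⊆ Reach F ε₁ S := by
    intro v hv
    obtain ⟨z', hz'R, hz'd⟩ := Metric.mem_closure_iff.1 h0 (η / 2) (by linarith)
    set a : Euc n := z' - φ 0 with hadef
    set b : Euc n := v - φ t with hbdef
    have hna : ‖a‖ ≤ η / 2 := by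
      rw [hadef, ← dist_eq_norm, dist_comm]
      exact hz'd.le
    have hnb : ‖b‖ ≤ η / 2 := by
      rw [hbdef, ← dist_eq_norm]
      exact (Metric.mem_ball.1 hv).le
    have hχdist : ∀ s ∈ Icc 0 t,
        dist (φ s + (1 - s / t) • a + (s / t) • b) (φ s) ≤ η := by
      intro s hsI
      have hθ1 : 0 ≤ s / t := div_nonneg hsI.1 htpos.le
      have hθ2 : s / t ≤ 1 := (div_le_one htpos).2 hsI.2
      have he : φ s + (1 - s / t) • a + (s / t) • b - φ s
          = (1 - s / t) • a + (s / t) • b := by abel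
      rw [dist_eq_norm, he]
      have e1 : ‖(1 - s / t) • a‖ ≤ (1 - s / t) * (η / 2) := by
        rw [norm_smul, Real.norm_eq_abs, abs_of_nonneg (by linarith)]
        exact mul_le_mul_of_nonneg_left hna (by linarith)
      have e2 : ‖(s / t) • b‖ ≤ (s / t) * (η / 2) := by
        rw [norm_smul, Real.norm_eq_abs, abs_of_nonneg hθ1]
        exact mul_le_mul_of_nonneg_left hnb hθ1
      calc ‖(1 - s / t) • a + (s / t) • b‖ ≤ ‖(1 - s / t) • a‖ + ‖(s / t) • b‖ :=
            norm_add_le _ _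
        _ ≤ (1 - s / t) * (η / 2) + (s / t) * (η / 2) := add_le_add e1 e2
        _ = η / 2 := by ring
        _ ≤ η := by linarith
    have hφQ : ∀ s ∈ Icc 0 t, φ s ∈ Metric.cthickening 1 (φ '' Icc 0 t) :=
      fun s hsI => hPQ (Set.mem_image_of_mem φ hsI)
    have hχQ : ∀ s ∈ Icc 0 t,
        (φ s + (1 - s / t) • a + (s / t) • b) ∈ Metric.cthickening 1 (φ '' Icc 0 t) := by
      intro s hsI
      exact Metric.mem_cthickening_of_dist_le _ (φ s) 1 _ (Set.mem_image_of_mem φ hsI)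
        (le_trans (hχdist s hsI) hη1)
    have hχsol := sol_shift (F := F) (ε := ε) (ε' := ε₁) htpos hsolt a b (m / 4)
      (by
        intro s hsI
        have h1 := hη₁ _ (hχQ s hsI) _ (hφQ s hsI) (le_trans (hχdist s hsI) hηη₁)
        have h2 := hmle _ (hφQ s hsI)
        have h3 : ε (φ s) ≤ ε₂ (φ s) := hεle _
        have h4 : ‖b - a‖ / t ≤ m / 4 := by
          rw [div_le_iff₀ htpos]
          calc ‖b - a‖ ≤ ‖b‖ + ‖a‖ := norm_sub_le _ _
            _ ≤ η := by linarith
            _ ≤ t * m / 8 := hηtm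
            _ ≤ m / 4 * t := by ring_nf; linarith [mul_nonneg htpos.le hmpos.le]
        have habs := abs_le.1 h1
        linarith [habs.1, habs.2])
      (by
        intro s hsI w hw
        exact hη₂ _ (hφQ s hsI) _ (le_trans (hχdist s hsI) hηη₂) w hw)
    have hχ0 : φ 0 + (1 - 0 / t) • a + (0 / t) • b = z' := by
      rw [zero_div, sub_zero, one_smul, zero_smul, add_zero, hadef]
      abel
    have hχt : φ t + (1 - t / t) • a + (t / t) • b = v := by
      rw [div_self htpos.ne', sub_self, zero_smul, add_zero, one_smul, hbdef]
      abel
    have := reach_extend hz'R htpos.le hχsol hχ0 t ⟨htpos.le, le_refl t⟩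
    rwa [hχt] at this
  exact mem_interior.2 ⟨Metric.ball (φ t) (η / 2), hball, Metric.isOpen_ball,
    Metric.mem_ball_self (by linarith)⟩

end Lemma12Aux6
/-- Lemma 12: inflating the reachable set while preserving recurrence and
contractivity. -/
theorem lemma12_inflation_recurrence_contractivity {n : ℕ} (hn : 1 ≤ n)
    (F : Euc n → Set (Euc n))
    (hFC : ForwardComplete F) (hUSC : USC F) (hLSC : LSC F) (hVal : NCCValues F)
    (Xo : Set (Euc n)) (εbar ε₁ ε₂ : Euc n → ℝ)
    (hεbar : Continuous εbar) (hε₁ : Continuous ε₁) (hε₂ : Continuous ε₂)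
    (hlt : ∀ x, 0 < ε₂ x ∧ ε₂ x < ε₁ x ∧ ε₁ x < εbar x)
    (U₁ : Set (Euc n)) (hU₁ : IsClosed U₁)
    (hU₁front : frontier (Reach F εbar Xo) ⊆ interior U₁)
    (hU₁rec : ∀ ε : Euc n → ℝ, Continuous ε → (∀ x, 0 < ε x ∧ ε x ≤ ε₁ x) →
      LocallyRecurrent F ε (Reach F εbar Xo) U₁ ∧
      LocallyRecurrent (fun x => -F x) ε (Reach F εbar Xo)ᶜ U₁)
    (δ : Euc n → ℝ) (hδ : Continuous δ) (hδpos : ∀ x, 0 < δ x)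
    (hδfront : closure (⋃ x ∈ Reach F εbar Xo, Metric.closedBall x (δ x)) \
        interior (Reach F εbar Xo) ⊆ interior U₁)
    (hδrec : ∀ ε : Euc n → ℝ, Continuous ε → (∀ x, 0 < ε x ∧ ε x ≤ ε₁ x) →
      LocallyRecurrent F ε
        (⋃ x ∈ Reach F εbar Xo, Metric.closedBall x (δ x)) U₁ ∧
      LocallyRecurrent (fun x => -F x) ε
        (⋃ x ∈ Reach F εbar Xo, Metric.closedBall x (δ x))ᶜ U₁) :
    ∃ ρo : Euc n → ℝ, Continuous ρo ∧ (∀ x, 0 < ρo x) ∧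
      ∀ K' : Set (Euc n),
        K' = Reach F ε₁ (⋃ x ∈ Reach F εbar Xo, Metric.closedBall x (ρo x)) →
        -- (1)
        (closure K' ⊆
            interior (⋃ x ∈ Reach F εbar Xo, Metric.closedBall x (δ x)) ∧
          ∀ x : Euc n,
            x ∉ interior (⋃ y ∈ Reach F εbar Xo, Metric.closedBall y (δ y)) →
            Metric.closedBall x (ρo x) ∩ closure K' = ∅) ∧
        -- (2)
        (∃ Uhat₁ : Set (Euc n), IsClosed Uhat₁ ∧ Uhat₁ ⊆ interior U₁ ∧
          closure (⋃ x ∈ Reach F εbar Xo, Metric.closedBall x (δ x)) \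
              interior (Reach F εbar Xo) ⊆ interior Uhat₁ ∧
          ∀ x ∈ Uhat₁, Metric.closedBall x (ρo x) ⊆ U₁) ∧
        -- (3)
        (∀ ε : Euc n → ℝ, Continuous ε → (∀ x, 0 < ε x ∧ ε x ≤ ε₂ x) →
          LocallyRecurrent F ε K' U₁ ∧
          LocallyRecurrent (fun x => -F x) ε K'ᶜ U₁ ∧
          ForwardContractive F ε (closure K') ∧
          ForwardContractive (fun x => -F x) ε (interior K')ᶜ ∧
          (∀ (T : ℝ) (φ : ℝ → Euc n), IsSolution F ε (Icc 0 T) φ →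
            φ 0 ∈ interior K' → ∀ t ∈ Ioc (0:ℝ) T, φ t ∉ frontier K') ∧
          (∀ (T : ℝ) (ψ : ℝ → Euc n),
            IsSolution (fun x => -F x) ε (Icc 0 T) ψ →
            ψ 0 ∉ closure K' → ∀ t ∈ Ioc (0:ℝ) T, ψ t ∉ frontier K')) := by
  classical
  set K : Set (Euc n) := Reach F εbar Xo with hKdef
  set Kδ : Set (Euc n) := ⋃ x ∈ K, Metric.closedBall x (δ x) with hKδdef
  set Hs : Set (Euc n) := ⋃ x ∈ K, Metric.closedBall x (δ x / 2) with hHsdef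
  have hT2 : closure Hs ⊆ interior Kδ := closure_infl hδ hδpos
  have hHsKδ : Hs ⊆ Kδ := by
    refine Set.iUnion₂_mono fun x _ => Metric.closedBall_subset_closedBall ?_
    linarith [hδpos x]
  set W : Set (Euc n) := interior U₁ with hWdef
  set C : Set (Euc n) := closure Kδ \ interior K with hCdef
  have hCcl : IsClosed C := by
    rw [hCdef, Set.diff_eq]
    exact isClosed_closure.inter isOpen_interior.isClosed_compl
  have hCW : C ⊆ W := hδfront
  -- step 1 : the auxiliary closed set Uh
  have hUhat : ∃ (Uh : Set (Euc n)) (w : Euc n → ℝ),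
      IsClosed Uh ∧ Uh ⊆ W ∧ C ⊆ interior Uh ∧
      (∀ x ∈ Uh, ∀ ρ : ℝ, 0 < ρ → ρ ≤ w x → Metric.closedBall x ρ ⊆ U₁) ∧
      (∀ x : Euc n, ∃ r > 0, ∃ ρ > 0, ∀ y : Euc n, dist y x ≤ r → y ∈ Uh → ρ ≤ w y) := by
    by_cases hWc : Wᶜ = (∅ : Set (Euc n))
    · have hWuniv : W = Set.univ := by
        rw [← Set.compl_empty_iff]; exact hWc
      have hU₁univ : U₁ = Set.univ := by
        apply Set.eq_univ_of_univ_subset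
        rw [← hWuniv]
        exact interior_subset
      refine ⟨Set.univ, fun _ => 1, isClosed_univ, by rw [hWuniv], by simp,
        fun x _ ρ _ _ => by rw [hU₁univ]; exact Set.subset_univ _,
        fun x => ⟨1, one_pos, 1, one_pos, fun y _ _ => le_refl 1⟩⟩
    · by_cases hCe : C = ∅
      · exact ⟨∅, fun _ => 1, isClosed_empty, Set.empty_subset _, by simp [hCe],
          fun x hx => absurd hx (Set.notMem_empty x),
          fun x => ⟨1, one_pos, 1, one_pos, fun y _ hy => absurd hy (Set.notMem_empty y)⟩⟩
      · have hWcne : (Wᶜ : Set (Euc n)).Nonempty := Set.nonempty_iff_ne_empty.2 hWc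
        have hCne : C.Nonempty := Set.nonempty_iff_ne_empty.2 hCe
        have hWccl : IsClosed (Wᶜ : Set (Euc n)) := isOpen_interior.isClosed_compl
        have hucont : Continuous fun x : Euc n => Metric.infDist x Wᶜ :=
          Metric.continuous_infDist_pt _
        have hupos : ∀ x : Euc n, x ∈ W → 0 < Metric.infDist x Wᶜ := by
          intro x hx
          exact (hWccl.notMem_iff_infDist_pos hWcne).1 (by simpa using hx)
        have hUhcl : IsClosed {x : Euc n | Metric.infDist x C ≤ Metric.infDist x Wᶜ / 2} :=
          isClosed_le (Metric.continuous_infDist_pt _) (hucont.div_const 2)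
        have hUhW : {x : Euc n | Metric.infDist x C ≤ Metric.infDist x Wᶜ / 2} ⊆ W := by
          intro x hx
          by_contra hxW
          have hu0 : Metric.infDist x Wᶜ = 0 := Metric.infDist_zero_of_mem hxW
          have h1 : Metric.infDist x C ≤ 0 := by
            have := hx
            rw [Set.mem_setOf_eq, hu0] at this
            linarith
          have h2 : Metric.infDist x C = 0 := le_antisymm h1 Metric.infDist_nonneg
          have h3 : x ∈ C := (hCcl.mem_iff_infDist_zero hCne).2 h2
          exact hxW (hCW h3)
        refine ⟨{x : Euc n | Metric.infDist x C ≤ Metric.infDist x Wᶜ / 2},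
          fun x => Metric.infDist x Wᶜ / 2, hUhcl, hUhW, ?_, ?_, ?_⟩
        · intro x hx
          have hop : IsOpen {x : Euc n | Metric.infDist x C < Metric.infDist x Wᶜ / 2} :=
            isOpen_lt (Metric.continuous_infDist_pt _) (hucont.div_const 2)
          have hsub : {x : Euc n | Metric.infDist x C < Metric.infDist x Wᶜ / 2}
              ⊆ {x : Euc n | Metric.infDist x C ≤ Metric.infDist x Wᶜ / 2} :=
            fun y hy => Set.mem_setOf_eq ▸ le_of_lt (by exact hy)
          have hmem : x ∈ {x : Euc n | Metric.infDist x C < Metric.infDist x Wᶜ / 2} := by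
            rw [Set.mem_setOf_eq, Metric.infDist_zero_of_mem hx]
            exact half_pos (hupos x (hCW hx))
          exact interior_maximal hsub hop hmem
        · intro x hx ρ hρpos hρle z hz
          have hzx : dist z x ≤ Metric.infDist x Wᶜ / 2 :=
            le_trans (Metric.mem_closedBall.1 hz) hρle
          have hux : 0 < Metric.infDist x Wᶜ := hupos x (hUhW hx)
          have hzW : z ∈ W := by
            by_contra hzc
            have := Metric.infDist_le_dist_of_mem (x := x) (show z ∈ Wᶜ from hzc)
            rw [dist_comm] at this
            linarith
          exact interior_subset hzW
        · intro x
          by_cases hxU : x ∈ {x : Euc n | Metric.infDist x C ≤ Metric.infDist x Wᶜ / 2}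
          · have hux : 0 < Metric.infDist x Wᶜ := hupos x (hUhW hxU)
            refine ⟨Metric.infDist x Wᶜ / 4, by linarith, Metric.infDist x Wᶜ / 4,
              by linarith, fun y hyx _ => ?_⟩
            have h1 : Metric.infDist x Wᶜ ≤ Metric.infDist y Wᶜ + dist x y :=
              Metric.infDist_le_infDist_add_dist
            rw [dist_comm] at h1
            linarith
          · obtain ⟨rr, hrr, hb⟩ := Metric.isOpen_iff.1 hUhcl.isOpen_compl x hxU
            exact ⟨rr / 2, by linarith, 1, one_pos, fun y hyx hyU =>
              absurd hyU (hb (Metric.mem_ball.2 (by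
                rw [dist_comm] at hyx ⊢
                linarith)))⟩
  obtain ⟨Uh, wF, hUhcl, hUhW, hCUh, hUhball, hUhloc⟩ := hUhat
  -- step 2 : the constraint predicate and the continuous radius function
  set Φ : Euc n → ℝ → Prop := fun x ρ =>
    (x ∈ K → ∀ t : ℝ, 0 ≤ t → ∀ ψ : ℝ → Euc n, IsSolution F ε₁ (Icc 0 t) ψ →
        ψ 0 ∈ Metric.closedBall x ρ → ∀ s ∈ Icc 0 t,
          ψ s ∈ K ∪ Metric.closedBall x (δ x / 2)) ∧
    (x ∉ interior Kδ → ∀ y ∈ Metric.closedBall x ρ, y ∉ closure Hs) ∧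
    (x ∈ Uh → ρ ≤ wF x) with hΦdef
  have hmono : ∀ x ρ ρ', Φ x ρ → 0 < ρ' → ρ' ≤ ρ → Φ x ρ' := by
    rintro x ρ ρ' ⟨h1, h2, h3⟩ hpos hle
    exact ⟨fun hxK t ht ψ hψ h0 =>
        h1 hxK t ht ψ hψ (Metric.closedBall_subset_closedBall hle h0),
      fun hx y hy => h2 hx y (Metric.closedBall_subset_closedBall hle hy),
      fun hx => le_trans hle (h3 hx)⟩
  have hloc : ∀ x, ∃ r > 0, ∃ ρ > 0, ∀ y, dist y x ≤ r → Φ y ρ := by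
    intro x
    have hinv : ∀ y ∈ K, ∀ T : ℝ, 0 ≤ T → ∀ χ : ℝ → Euc n,
        IsSolution F εbar (Icc 0 T) χ → χ 0 = y → ∀ s ∈ Icc 0 T, χ s ∈ K :=
      fun y hy T hT χ hχ hχ0 => reach_extend hy hT hχ hχ0
    obtain ⟨r₁, hr₁, ρ₁, hρ₁, h₁⟩ := ml_local hUSC hLSC hVal hεbar hε₁
      (fun q => lt_trans (hlt q).1 (hlt q).2.1) (fun q => (hlt q).2.2) hδ hδpos hinv x
    obtain ⟨r₂, hr₂, ρ₂, hρ₂, h₂⟩ : ∃ r > 0, ∃ ρ > 0, ∀ y : Euc n, dist y x ≤ r →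
        (y ∉ interior Kδ → ∀ z ∈ Metric.closedBall y ρ, z ∉ closure Hs) := by
      by_cases hx : x ∈ interior Kδ
      · obtain ⟨rr, hrr, hb⟩ := Metric.isOpen_iff.1 isOpen_interior x hx
        exact ⟨rr / 2, by linarith, 1, one_pos, fun y hyx hy =>
          absurd (hb (Metric.mem_ball.2 (by rw [dist_comm] at hyx ⊢; linarith))) hy⟩
      · have hxnc : x ∉ closure Hs := fun hc => hx (hT2 hc)
        obtain ⟨rr, hrr, hb⟩ := Metric.isOpen_iff.1 isClosed_closure.isOpen_compl x hxnc
        refine ⟨rr / 4, by linarith, rr / 4, by linarith, fun y hyx _ z hz => ?_⟩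
        have h1 : dist z y ≤ rr / 4 := Metric.mem_closedBall.1 hz
        have h2 : dist z x ≤ rr / 2 :=
          le_trans (dist_triangle z y x) (by linarith)
        exact hb (Metric.mem_ball.2 (by linarith))
    obtain ⟨r₃, hr₃, ρ₃, hρ₃, h₃⟩ := hUhloc x
    refine ⟨min r₁ (min r₂ r₃), lt_min hr₁ (lt_min hr₂ hr₃),
      min ρ₁ (min ρ₂ ρ₃), lt_min hρ₁ (lt_min hρ₂ hρ₃), fun y hy => ?_⟩
    have hy₁ : dist y x ≤ r₁ := le_trans hy (min_le_left _ _)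
    have hy₂ : dist y x ≤ r₂ := le_trans hy (le_trans (min_le_right _ _) (min_le_left _ _))
    have hy₃ : dist y x ≤ r₃ := le_trans hy (le_trans (min_le_right _ _) (min_le_right _ _))
    refine ⟨fun hyK t ht ψ hψ h0 => h₁ y hy₁ hyK t ht ψ hψ
        (Metric.closedBall_subset_closedBall (min_le_left _ _) h0),
      fun hyint z hz => h₂ y hy₂ hyint z
        (Metric.closedBall_subset_closedBall
          (le_trans (min_le_right _ _) (min_le_left _ _)) hz),
      fun hyU => le_trans (le_trans (min_le_right _ _) (min_le_right _ _)) (h₃ y hy₃ hyU)⟩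
  obtain ⟨ρo, hρoc, hρopos, hρoΦ⟩ := minorant Φ hmono hloc
  refine ⟨ρo, hρoc, hρopos, ?_⟩
  intro K' hK'
  set S : Set (Euc n) := ⋃ x ∈ K, Metric.closedBall x (ρo x) with hSdef
  have hSK' : S ⊆ K' := by
    rw [hK']
    exact fun z hz => mem_reach_self hz
  have hKint : K ⊆ interior K' := by
    intro x hx
    refine mem_interior.2 ⟨Metric.ball x (ρo x), ?_, Metric.isOpen_ball,
      Metric.mem_ball_self (hρopos x)⟩
    refine subset_trans Metric.ball_subset_closedBall (subset_trans ?_ hSK')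
    exact Set.subset_iUnion₂ (s := fun x _ => Metric.closedBall x (ρo x)) x hx
  have hKHs : K ⊆ Hs := by
    intro x hx
    exact Set.mem_iUnion₂.2 ⟨x, hx, Metric.mem_closedBall_self (by linarith [hδpos x])⟩
  have hK'Hs : K' ⊆ Hs := by
    rw [hK']
    rintro y ⟨t, ht, ψ, hψ, hψ0, rfl⟩
    obtain ⟨x₀, hx₀K, hx₀b⟩ := Set.mem_iUnion₂.1 hψ0
    have := (hρoΦ x₀).1 hx₀K t ht ψ hψ hx₀b t ⟨ht, le_refl t⟩
    rcases this with hK | hb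
    · exact hKHs hK
    · exact Set.mem_iUnion₂.2 ⟨x₀, hx₀K, hb⟩
  have h1a : closure K' ⊆ interior Kδ := subset_trans (closure_mono hK'Hs) hT2
  refine ⟨⟨h1a, ?_⟩, ?_, ?_⟩
  · intro x hx
    apply Set.eq_empty_iff_forall_notMem.2
    rintro y ⟨hy1, hy2⟩
    exact ((hρoΦ x).2.1 hx y hy1) (closure_mono hK'Hs hy2)
  · refine ⟨Uh, hUhcl, hUhW, hCUh, fun x hx => ?_⟩
    exact hUhball x hx (ρo x) (hρopos x) ((hρoΦ x).2.2 hx)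
  · intro ε hεc hεp
    have hεle₁ : ∀ q, 0 < ε q ∧ ε q ≤ ε₁ q :=
      fun q => ⟨(hεp q).1, le_trans (hεp q).2 (hlt q).2.1.le⟩
    have hCL : ∀ (T : ℝ) (φ : ℝ → Euc n), IsSolution F ε (Icc 0 T) φ →
        φ 0 ∈ closure K' → ∀ t ∈ Ioc 0 T, φ t ∈ interior K' := by
      intro T φ hsol h0 t htI
      rw [hK']
      rw [hK'] at h0
      exact core hUSC hLSC hVal hε₁ hε₂ (fun q => (hlt q).2.1)
        (fun q => (hεp q).2) hsol h0 t htI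
    refine ⟨?_, ?_, ⟨?_, ?_⟩, ⟨?_, ?_⟩, ?_, ?_⟩
    · -- K' locally recurrent
      intro φ I hmax h0
      obtain ⟨t, htI, htm⟩ := (hU₁rec ε hεc hεle₁).1 φ I hmax h0
      exact ⟨t, htI, hKint (interior_subset htm)⟩
    · -- K'ᶜ locally recurrent for the reversed system
      intro φ I hmax h0
      obtain ⟨t, htI, htm⟩ := (hδrec ε hεc hεle₁).2 φ I hmax h0
      refine ⟨t, htI, ?_⟩
      rw [interior_compl] at htm ⊢
      intro hc
      exact htm (closure_mono (subset_trans hK'Hs hHsKδ) hc)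
    · -- closure K' forward invariant
      intro T φ hsol h0 t ht
      rcases eq_or_lt_of_le ht.1 with h | h
      · rwa [← h]
      · exact subset_closure (interior_subset (hCL T φ hsol h0 t ⟨h, ht.2⟩))
    · -- contractivity at the boundary
      intro x₀ hx₀ T hT φ hsol h0
      refine ⟨T, ⟨hT, le_refl T⟩, fun t htI => ?_⟩
      have h0' : φ 0 ∈ closure K' := by
        rw [h0]
        have := frontier_subset_closure hx₀
        rwa [closure_closure] at this
      exact interior_mono subset_closure (hCL T φ hsol h0' t htI)
    · -- complement of interior forward invariant for the reversed system
      intro T ψ hsol h0 t ht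
      rcases eq_or_lt_of_le ht.1 with h | h
      · rwa [← h]
      · rw [Set.mem_compl_iff]
        intro hmem
        have hrev := sol_reverse hsol ⟨ht.1, ht.2⟩
        have h00 : (fun s => ψ (t - s)) 0 ∈ closure K' := by
          have : ψ (t - 0) ∈ closure K' := by
            rw [sub_zero]
            exact subset_closure (interior_subset hmem)
          exact this
        have hfin := hCL t _ hrev h00 t ⟨h, le_refl t⟩
        have : ψ (t - t) ∈ interior K' := hfin
        rw [sub_self] at this
        exact h0 this
    · -- boundary contractivity for the reversed system
      intro x₀ hx₀ T hT ψ hsol h0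
      refine ⟨T, ⟨hT, le_refl T⟩, fun t htI => ?_⟩
      rw [interior_compl, Set.mem_compl_iff]
      intro hmem
      have hm' : ψ t ∈ closure K' := closure_mono interior_subset hmem
      have hrev := sol_reverse hsol ⟨htI.1.le, htI.2⟩
      have h00 : (fun s => ψ (t - s)) 0 ∈ closure K' := by
        have : ψ (t - 0) ∈ closure K' := by rw [sub_zero]; exact hm'
        exact this
      have hfin := hCL t _ hrev h00 t ⟨htI.1, le_refl t⟩
      have hint : ψ (t - t) ∈ interior K' := hfin
      rw [sub_self, h0] at hint
      rw [frontier_compl, ← closure_diff_interior] at hx₀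
      exact hx₀.2 (by rwa [interior_interior])
    · -- solutions from the interior avoid the boundary
      intro T φ hsol h0 t htI
      have := hCL T φ hsol (subset_closure (interior_subset h0)) t htI
      rw [← closure_diff_interior]
      exact fun hc => hc.2 this
    · -- reversed solutions from outside the closure avoid the boundary
      intro T ψ hsol h0 t htI hfr
      have hm' : ψ t ∈ closure K' := frontier_subset_closure hfr
      have hrev := sol_reverse hsol ⟨htI.1.le, htI.2⟩
      have h00 : (fun s => ψ (t - s)) 0 ∈ closure K' := by
        have : ψ (t - 0) ∈ closure K' := by rw [sub_zero]; exact hm'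
        exact this
      have hfin := hCL t _ hrev h00 t ⟨htI.1, le_refl t⟩
      have hint : ψ (t - t) ∈ interior K' := hfin
      rw [sub_self] at hint
      exact h0 (subset_closure (interior_subset hint))
end
end

section
/- (Appendix Lemma: Nagumo-type forward invariance via exterior tangent-cone condition) Let F : E → Set E be upper semicontinuous with nonempty compact convex values and let K ⊆ E be closed. Suppose that for every x ∈ E with x ∉ K and every y ∈ K with ‖x − y‖ = Metric.infDist x K (i.e., y a projection of x onto K), F(x) ⊆ T_K(y), where T_K(y) is the contingent (Bouligand) tangent cone to K at y. Then K is forward invariant for Σ : every solution φ of Σ on a compact interval [0,T] with φ(0) ∈ K satisfies φ(t) ∈ K for all t ∈ [0,T]. -/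
open MeasureTheory Set Pointwise Topology

noncomputable section

/-- The contingent (Bouligand) tangent cone to `K` at `y`. -/
def ContingentCone {n : ℕ} (K : Set (Euc n)) (y : Euc n) : Set (Euc n) :=
  {v | ∀ r > (0:ℝ), ∀ δ > (0:ℝ), ∃ h ∈ Ioo (0:ℝ) δ,
    Metric.infDist (y + h • v) K ≤ r * h}


open scoped InnerProductSpace

set_option maxHeartbeats 1000000

/-- If `y` is a metric projection of `x` onto `K` and `v` lies in the contingent
cone to `K` at `y`, then `⟪x - y, v⟫ ≤ 0`. -/
lemma nagumo_inner_nonpos {n : ℕ} {K : Set (Euc n)} {x y v : Euc n}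
    (hyK : y ∈ K) (hproj : ‖x - y‖ = Metric.infDist x K)
    (hv : v ∈ ContingentCone K y) : ⟪x - y, v⟫_ℝ ≤ 0 := by
  have hKne : K.Nonempty := ⟨y, hyK⟩
  have main : ∀ η > (0:ℝ), ⟪x - y, v⟫_ℝ ≤ η := by
    intro η hη
    set ρ := ‖x - y‖ with hρ
    have hρ0 : 0 ≤ ρ := norm_nonneg _
    set r : ℝ := η / (4 * (ρ + 1)) with hr
    have hrpos : 0 < r := by positivity
    set δ : ℝ := η / ((2*r + ‖v‖)^2 + 1) with hδ
    have hδpos : 0 < δ := by positivity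
    obtain ⟨h, ⟨hh0, hhδ⟩, hhd⟩ := hv r hrpos δ hδpos
    have h2 : Metric.infDist (y + h • v) K < 2 * r * h := by
      have : r * h < 2 * r * h := by nlinarith
      linarith [hhd]
    obtain ⟨z, hzK, hz⟩ := (Metric.infDist_lt_iff hKne).1 h2
    have hz' : ‖y + h • v - z‖ < 2 * r * h := by rwa [dist_eq_norm] at hz
    have hxz : ρ ≤ ‖x - z‖ := by
      rw [hproj, ← dist_eq_norm]
      exact Metric.infDist_le_dist_of_mem hzK
    have e1 : ‖x - z‖^2 = ρ^2 - 2*⟪x-y, z-y⟫_ℝ + ‖z - y‖^2 := by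
      have hxzz : x - z = (x - y) - (z - y) := by abel
      rw [hxzz, norm_sub_sq_real, hρ]
    have e2 : 2*⟪x-y, z-y⟫_ℝ ≤ ‖z - y‖^2 := by nlinarith [hxz, norm_nonneg (x - z)]
    have e3 : ‖z - y‖ ≤ h * (2*r + ‖v‖) := by
      have hzy : z - y = (z - (y + h • v)) + h • v := by abel
      have h4 : ‖z - y‖ ≤ ‖z - (y + h • v)‖ + ‖h • v‖ := by
        rw [hzy]; exact norm_add_le _ _
      have h5 : ‖z - (y + h • v)‖ < 2*r*h := by rwa [norm_sub_rev] at hz'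
      have h6 : ‖h • v‖ = h * ‖v‖ := by
        rw [norm_smul, Real.norm_eq_abs, abs_of_pos hh0]
      nlinarith
    have e4 : ⟪x-y, y + h • v - z⟫_ℝ ≤ ρ * (2*r*h) := by
      calc ⟪x-y, y + h • v - z⟫_ℝ ≤ ‖x-y‖ * ‖y + h • v - z‖ := real_inner_le_norm _ _
      _ ≤ ρ * (2*r*h) := by
          rw [← hρ]
          exact mul_le_mul_of_nonneg_left hz'.le hρ0
    have e5 : ⟪x-y, h • v⟫_ℝ = ⟪x-y, y + h • v - z⟫_ℝ + ⟪x-y, z - y⟫_ℝ := by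
      rw [← inner_add_right]
      congr 1
      abel
    have e5' : ⟪x-y, h • v⟫_ℝ = h * ⟪x-y, v⟫_ℝ := real_inner_smul_right _ _ _
    have e6 : h * ⟪x-y, v⟫_ℝ ≤ h * (2*ρ*r + h*(2*r+‖v‖)^2/2) := by
      have hzy2 : ‖z - y‖^2 ≤ (h * (2*r+‖v‖))^2 := by
        nlinarith [e3, norm_nonneg (z - y)]
      nlinarith [e2, e4, e5, e5', hzy2]
    have e7 : ⟪x-y, v⟫_ℝ ≤ 2*ρ*r + h*(2*r+‖v‖)^2/2 := le_of_mul_le_mul_left e6 hh0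
    have b1 : 2*ρ*r ≤ η/2 := by
      rw [hr]
      rw [mul_comm (2*ρ) (η / (4 * (ρ + 1))), div_mul_eq_mul_div, div_le_div_iff₀ (by positivity) (by norm_num)]
      nlinarith
    have b2 : h*(2*r+‖v‖)^2/2 ≤ η/2 := by
      have hQ : (0:ℝ) ≤ (2*r+‖v‖)^2 := sq_nonneg _
      have hδQ : δ * ((2*r+‖v‖)^2 + 1) = η := by
        rw [hδ]; field_simp
      nlinarith [mul_le_mul_of_nonneg_right hhδ.le hQ, hδpos]
    linarith
  by_contra hcon
  push_neg at hcon
  linarith [main (⟪x - y, v⟫_ℝ / 2) (by linarith)]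

/-- Appendix Lemma: Nagumo-type forward invariance via an exterior
tangent-cone condition. -/
theorem nagumo_forward_invariance {n : ℕ} (hn : 1 ≤ n)
    (F : Euc n → Set (Euc n)) (hUSC : USC F) (hVal : NCCValues F)
    (K : Set (Euc n)) (hK : IsClosed K)
    (hcone : ∀ x : Euc n, x ∉ K → ∀ y ∈ K, ‖x - y‖ = Metric.infDist x K →
      F x ⊆ ContingentCone K y) :
    ∀ (T : ℝ) (φ : ℝ → Euc n), IsSolution F (fun _ => 0) (Icc 0 T) φ →
      φ 0 ∈ K → ∀ t ∈ Icc (0:ℝ) T, φ t ∈ K := by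
  classical
  rintro T φ ⟨g, hgli, hφeq, hgmem⟩ hφ0 t ht
  have hT : (0:ℝ) ≤ T := le_trans ht.1 ht.2
  have hKne : K.Nonempty := ⟨φ 0, hφ0⟩
  have hgmem' : ∀ᵐ s ∂(volume : Measure ℝ), s ∈ Icc (0:ℝ) T → g s ∈ F (φ s) := by
    filter_upwards [hgmem] with s hs hsI
    have h1 := hs hsI
    simpa [Metric.closedBall_zero, Set.add_singleton] using h1
  have hgInt : ∀ a b : ℝ, IntervalIntegrable g volume a b := by
    intro a b
    rw [intervalIntegrable_iff]
    exact (hgli.integrableOn_isCompact isCompact_uIcc).mono_set Set.Ioc_subset_Icc_self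
  have h0mem : (0:ℝ) ∈ Icc (0:ℝ) T := ⟨le_refl _, hT⟩
  have hφcont : ContinuousOn φ (Icc 0 T) := by
    have hc : Continuous fun u => φ 0 + ∫ s in (0:ℝ)..u, g s :=
      continuous_const.add (intervalIntegral.continuous_primitive hgInt 0)
    exact hc.continuousOn.congr fun u hu => hφeq 0 h0mem u hu
  set m : ℝ → ℝ := fun u => (Metric.infDist (φ u) K)^2 with hm
  have hmcont : ContinuousOn m (Icc 0 T) :=
    ((Metric.continuous_infDist_pt K).comp_continuousOn hφcont).pow 2
  have hm0 : m 0 = 0 := by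
    simp [hm, Metric.infDist_zero_of_mem hφ0]
  -- Main claim: `m u ≤ (2ru + ε)²` for all `r, ε > 0`.
  have main : ∀ r > (0:ℝ), ∀ ε > (0:ℝ), ∀ u ∈ Icc (0:ℝ) T, m u ≤ (2*r*u + ε)^2 := by
    intro r hr ε hε
    set f' : ℝ → ℝ := fun u => if φ u ∈ K then 0 else 2*r*Real.sqrt (m u) with hf'def
    have hslope : ∀ x ∈ Ico (0:ℝ) T, ∀ r', f' x < r' →
        ∃ᶠ z in 𝓝[>] x, slope m x z < r' := by
      intro x hx r' hr'
      obtain ⟨δ₀, hδ₀, hδ₀sub⟩ := hUSC (φ x) r hr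
      have hxmem : x ∈ Icc (0:ℝ) T := Ico_subset_Icc_self hx
      have hcx : ContinuousWithinAt φ (Icc 0 T) x := hφcont x hxmem
      rw [Metric.continuousWithinAt_iff] at hcx
      obtain ⟨δ₁, hδ₁, hδ₁c⟩ := hcx δ₀ hδ₀
      obtain ⟨M, hM⟩ := ((hVal (φ x)).2.1.isBounded).exists_norm_le
      have hM0 : 0 ≤ M := le_trans (norm_nonneg _) (hM _ (hVal (φ x)).1.choose_spec)
      -- averages of `g` over small intervals to the right of `x` lie in `F (φ x) + B̄ᵣ`
      have havg : ∀ z, x < z → z ≤ T → z - x < δ₁ →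
          (z - x)⁻¹ • (φ z - φ x) ∈ F (φ x) + Metric.closedBall (0:Euc n) r := by
        intro z hxz hzT hzδ
        have hzmem : z ∈ Icc (0:ℝ) T := ⟨le_trans hx.1 hxz.le, hzT⟩
        have hsub : Ioc x z ⊆ Icc (0:ℝ) T := fun τ hτ =>
          ⟨le_trans hx.1 hτ.1.le, le_trans hτ.2 hzT⟩
        have hDc : Convex ℝ (F (φ x) + Metric.closedBall (0:Euc n) r) :=
          (hVal (φ x)).2.2.add (convex_closedBall _ _)
        have hDcl : IsClosed (F (φ x) + Metric.closedBall (0:Euc n) r) :=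
          ((hVal (φ x)).2.1.add (isCompact_closedBall _ _)).isClosed
        have hμ0 : volume (Ioc x z) ≠ 0 := by
          rw [Real.volume_Ioc]
          simp only [ne_eq, ENNReal.ofReal_eq_zero, not_le]
          linarith
        have hμt : volume (Ioc x z) ≠ ⊤ := by
          rw [Real.volume_Ioc]; exact ENNReal.ofReal_ne_top
        have hae : ∀ᵐ τ ∂(volume.restrict (Ioc x z)),
            g τ ∈ F (φ x) + Metric.closedBall (0:Euc n) r := by
          filter_upwards [ae_restrict_of_ae hgmem', ae_restrict_mem measurableSet_Ioc]
            with τ h1 h2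
          have hτI : τ ∈ Icc (0:ℝ) T := hsub h2
          have hnear : ‖φ τ - φ x‖ < δ₀ := by
            have hd : dist τ x < δ₁ := by
              rw [Real.dist_eq, abs_of_nonneg (by linarith [h2.1.le] : (0:ℝ) ≤ τ - x)]
              linarith [h2.2]
            have := hδ₁c hτI hd
            rwa [dist_eq_norm] at this
          obtain ⟨w, hw, hwn⟩ := hδ₀sub (φ τ) hnear (h1 hτI)
          have hball : g τ - w ∈ Metric.closedBall (0:Euc n) r := by
            simpa [Metric.mem_closedBall, dist_zero_right] using hwn
          have := Set.add_mem_add hw hball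
          simpa using this
        have hint : IntegrableOn g (Ioc x z) volume :=
          (hgli.integrableOn_isCompact (isCompact_Icc (a := x) (b := z))).mono_set
            Set.Ioc_subset_Icc_self
        have hmem := hDc.set_average_mem hDcl hμ0 hμt hae hint
        have hφz : φ z - φ x = ∫ s in Set.Ioc x z, g s := by
          rw [hφeq x hxmem z hzmem, ← intervalIntegral.integral_of_le hxz.le]
          abel
        have havgeq : (z - x)⁻¹ • (φ z - φ x) = ⨍ τ in Set.Ioc x z, g τ := by
          rw [MeasureTheory.setAverage_eq, measureReal_def, Real.volume_Ioc,
            ENNReal.toReal_ofReal (by linarith : (0:ℝ) ≤ z - x), hφz]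
        rw [havgeq]
        exact hmem
      set c := f' x with hc
      -- the key growth estimate
      have key : ∀ z, x < z → z ≤ T → z - x < δ₁ →
          m z ≤ m x + (z-x)*c + (z-x)^2*(M+r)^2 := by
        intro z hxz hzT hzδ
        have hznn : (0:ℝ) < z - x := by linarith
        obtain ⟨w, hwF, e, he, hsum⟩ := Set.mem_add.1 (havg z hxz hzT hzδ)
        have hφzeq : φ z - φ x = (z - x) • (w + e) := by
          rw [hsum]
          exact (smul_inv_smul₀ (ne_of_gt hznn) _).symm
        have hne : ‖e‖ ≤ r := by
          simpa [Metric.mem_closedBall, dist_zero_right] using he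
        have hnwe : ‖w + e‖ ≤ M + r :=
          le_trans (norm_add_le _ _) (add_le_add (hM w hwF) hne)
        by_cases hpK : φ x ∈ K
        · have hmx : m x = 0 := by simp [hm, Metric.infDist_zero_of_mem hpK]
          have hc0 : c = 0 := by rw [hc, hf'def]; simp [hpK]
          have hz1 : Metric.infDist (φ z) K ≤ ‖φ z - φ x‖ := by
            rw [← dist_eq_norm]; exact Metric.infDist_le_dist_of_mem hpK
          have hz2 : ‖φ z - φ x‖ ≤ (z-x)*(M+r) := by
            rw [hφzeq, norm_smul, Real.norm_eq_abs, abs_of_pos hznn]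
            exact mul_le_mul_of_nonneg_left hnwe hznn.le
          have hinf_nn : 0 ≤ Metric.infDist (φ z) K := Metric.infDist_nonneg
          have hmz : m z = (Metric.infDist (φ z) K)^2 := rfl
          rw [hmx, hc0, hmz]
          nlinarith [hz1, hz2, hinf_nn, norm_nonneg (φ z - φ x)]
        · obtain ⟨y, hyK, hyd⟩ := hK.exists_infDist_eq_dist hKne (φ x)
          have hproj : ‖φ x - y‖ = Metric.infDist (φ x) K := by
            rw [hyd, dist_eq_norm]
          have hinner : ⟪φ x - y, w⟫_ℝ ≤ 0 :=
            nagumo_inner_nonpos hyK hproj (hcone (φ x) hpK y hyK hproj hwF)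
          have hmx : m x = ‖φ x - y‖^2 := by rw [hm]; dsimp only; rw [hproj]
          have hsq : Real.sqrt (m x) = ‖φ x - y‖ := by
            rw [hmx, Real.sqrt_sq (norm_nonneg _)]
          have hceq : c = 2*r*‖φ x - y‖ := by
            rw [hc, hf'def]; simp only [hpK, if_false]; rw [hsq]
          have hz1 : Metric.infDist (φ z) K ≤ ‖φ z - y‖ := by
            rw [← dist_eq_norm]; exact Metric.infDist_le_dist_of_mem hyK
          have hdec : φ z - y = (φ x - y) + (z-x) • (w + e) := by
            rw [← hφzeq]; abel
          have hexp : ‖φ z - y‖^2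
              = ‖φ x - y‖^2 + 2*⟪φ x - y, (z-x) • (w+e)⟫_ℝ + ‖(z-x) • (w+e)‖^2 := by
            rw [hdec, norm_add_sq_real]
          have hi2 : ⟪φ x - y, (z-x) • (w+e)⟫_ℝ
              = (z-x)*(⟪φ x - y, w⟫_ℝ + ⟪φ x - y, e⟫_ℝ) := by
            rw [real_inner_smul_right, inner_add_right]
          have hi3 : ⟪φ x - y, e⟫_ℝ ≤ ‖φ x - y‖ * r :=
            le_trans (real_inner_le_norm _ _)
              (mul_le_mul_of_nonneg_left hne (norm_nonneg _))
          have hns : ‖(z-x) • (w+e)‖ ≤ (z-x)*(M+r) := by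
            rw [norm_smul, Real.norm_eq_abs, abs_of_pos hznn]
            exact mul_le_mul_of_nonneg_left hnwe hznn.le
          have hmz2 : m z ≤ ‖φ z - y‖^2 := by
            have hinf_nn : 0 ≤ Metric.infDist (φ z) K := Metric.infDist_nonneg
            have hmz : m z = (Metric.infDist (φ z) K)^2 := rfl
            rw [hmz]
            nlinarith [hz1]
          have t1 : (z-x)*⟪φ x - y, w⟫_ℝ ≤ 0 := by nlinarith [hinner, hznn]
          have t2 : (z-x)*⟪φ x - y, e⟫_ℝ ≤ (z-x)*(‖φ x - y‖*r) :=
            mul_le_mul_of_nonneg_left hi3 hznn.le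
          have t3 : ‖(z-x) • (w+e)‖^2 ≤ ((z-x)*(M+r))^2 := by
            nlinarith [hns, norm_nonneg ((z-x) • (w+e))]
          rw [hmx, hceq]
          nlinarith [hmz2, hexp, hi2, t1, t2, t3]
      -- from the growth estimate to the frequent-slope bound
      have hxT : x < T := hx.2
      have hcnn : 0 ≤ c := by
        rw [hc, hf'def]
        dsimp only
        split
        · exact le_refl 0
        · positivity
      have hrc : 0 < r' - c := sub_pos.2 hr'
      set Q : ℝ := (M+r)^2 with hQdef
      have hQnn : 0 ≤ Q := sq_nonneg _
      set h₁ : ℝ := min (min (δ₁/2) (T - x)) ((r' - c)/(Q+1)) with hh₁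
      have hh₁pos : 0 < h₁ := by
        apply lt_min (lt_min (by linarith) (by linarith))
        positivity
      have hh₁δ : h₁ ≤ δ₁/2 := le_trans (min_le_left _ _) (min_le_left _ _)
      have hh₁T : h₁ ≤ T - x := le_trans (min_le_left _ _) (min_le_right _ _)
      have hh₁Q : h₁ ≤ (r' - c)/(Q+1) := min_le_right _ _
      have hd : ((r' - c)/(Q+1))*(Q+1) = r' - c := div_mul_cancel₀ _ (by positivity)
      have hev : ∀ᶠ z in 𝓝[>] x, slope m x z < r' := by
        have hIoc : Set.Ioc x (x + h₁) ∈ 𝓝[>] x :=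
          Ioc_mem_nhdsGT_of_mem ⟨le_refl x, by linarith⟩
        filter_upwards [hIoc] with z hz
        have hxz : x < z := hz.1
        have hzx : z - x ≤ h₁ := by linarith [hz.2]
        have hzT : z ≤ T := by linarith
        have hzδ : z - x < δ₁ := by linarith
        have hk := key z hxz hzT hzδ
        rw [slope_def_field, div_lt_iff₀ (by linarith : (0:ℝ) < z - x)]
        have hq1 : (z-x)*Q ≤ h₁*Q := mul_le_mul_of_nonneg_right hzx hQnn
        have hq2 : h₁*Q ≤ ((r' - c)/(Q+1))*Q := mul_le_mul_of_nonneg_right hh₁Q hQnn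
        have hq3 : ((r' - c)/(Q+1))*Q < r' - c := by nlinarith [hd, hrc, hQnn]
        nlinarith [hk, hq1, hq2, hq3]
      exact hev.frequently
    -- apply the fencing lemma
    intro u hu
    refine image_le_of_liminf_slope_right_lt_deriv_boundary' (f := m) (f' := f')
      (a := 0) (b := T) (B := fun u => (2*r*u + ε)^2) (B' := fun u => 4*r*(2*r*u + ε))
      hmcont hslope ?_ ?_ ?_ ?_ hu
    · rw [hm0]; positivity
    · have : Continuous fun u : ℝ => (2*r*u + ε)^2 := by continuity
      exact this.continuousOn
    · intro v hv
      have h1 : HasDerivAt (fun u : ℝ => 2*r*u + ε) (2*r) v := by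
        simpa using ((hasDerivAt_id v).const_mul (2*r)).add_const ε
      have h2 : HasDerivAt (fun u : ℝ => (2*r*u + ε)^2) _ v := h1.fun_pow 2
      have h3 : HasDerivAt (fun u : ℝ => (2*r*u + ε)^2) (4*r*(2*r*v + ε)) v := by
        convert h2 using 1
        ring
      exact h3.hasDerivWithinAt
    · intro v hv hmv
      have hvpos : 0 < 2*r*v + ε := by nlinarith [hv.1]
      by_cases hpK : φ v ∈ K
      · rw [hf'def]
        simp only [hpK, if_true]
        positivity
      · rw [hf'def]
        simp only [hpK, if_false]
        have h1 : Real.sqrt (m v) = 2*r*v + ε := by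
          rw [hmv, Real.sqrt_sq hvpos.le]
        rw [h1]
        nlinarith
  -- conclude
  have hnn : 0 ≤ Metric.infDist (φ t) K := Metric.infDist_nonneg
  have hzero : Metric.infDist (φ t) K = 0 := by
    have hle : ∀ η > (0:ℝ), Metric.infDist (φ t) K ≤ η := by
      intro η hη
      have hdpos : 0 < η/(4*(T+1)) := by positivity
      have h1 := main (η/(4*(T+1))) hdpos (η/2) (by positivity) t ht
      have hbnn : 0 ≤ 2*(η/(4*(T+1)))*t + η/2 := by
        have := ht.1
        positivity
      have h2 : Metric.infDist (φ t) K ≤ 2*(η/(4*(T+1)))*t + η/2 := by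
        have hmt : m t = (Metric.infDist (φ t) K)^2 := rfl
        rw [hmt] at h1
        nlinarith [h1, hnn, hbnn]
      have hd : (η/(4*(T+1)))*(4*(T+1)) = η := div_mul_cancel₀ _ (by positivity)
      have h3 : 2*(η/(4*(T+1)))*t + η/2 ≤ η := by
        nlinarith [mul_le_mul_of_nonneg_left ht.2 hdpos.le, hd, hdpos]
      linarith
    by_contra hne0
    have hpos : 0 < Metric.infDist (φ t) K := lt_of_le_of_ne hnn (Ne.symm hne0)
    linarith [hle (Metric.infDist (φ t) K / 2) (by linarith)]
  exact (hK.mem_iff_infDist_zero hKne).2 hzero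
end
end

section
/- (Appendix Lemma: infinitesimal decrease from monotonicity along solutions) Let F : E → Set E be continuous with nonempty compact convex values, let O ⊆ E be open, and let B : E → ℝ be continuously differentiable. Suppose that along every solution of Σ that remains in O the function B is nonincreasing; that is, for every solution φ of Σ on a compact interval [a,b] with φ([a,b]) ⊆ O and all a ≤ t ≤ t' ≤ b, B(φ(t')) ≤ B(φ(t)). Then fderiv ℝ B x η ≤ 0 for every x ∈ O and every η ∈ F(x). -/
open MeasureTheory Set Pointwise Topology

noncomputable section

set_option maxHeartbeats 1000000
set_option synthInstance.maxHeartbeats 1000000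
open BoundedContinuousFunction

lemma proj_exists {n : ℕ} (S : Set (Euc n)) (hne : S.Nonempty) (hcpt : IsCompact S)
    (hconv : Convex ℝ S) (u : Euc n) :
    ∃ v ∈ S, (∀ w ∈ S, ‖u - v‖ ≤ ‖u - w‖) ∧ ∀ w ∈ S, @inner ℝ _ _ (u - v) (w - v) ≤ (0:ℝ) := by
  obtain ⟨v, hv, hmin⟩ := exists_norm_eq_iInf_of_complete_convex hne
    (hcpt.isClosed.isComplete) hconv u
  refine ⟨v, hv, fun w hw => ?_, (norm_eq_iInf_iff_real_inner_le_zero hconv hv).1 hmin⟩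
  rw [hmin]
  exact ciInf_le ⟨0, Set.forall_mem_range.2 fun _ => norm_nonneg _⟩ (⟨w, hw⟩ : S)

lemma haus_cont {n : ℕ} (F : Euc n → Set (Euc n)) (hUSC : USC F) (hLSC : LSC F)
    (hVal : NCCValues F) (z : Euc n) {ε : ℝ} (hε : 0 < ε) :
    ∃ δ > (0:ℝ), ∀ y, ‖y - z‖ < δ →
      (∀ v ∈ F z, ∃ w ∈ F y, ‖w - v‖ ≤ ε) ∧ (∀ w ∈ F y, ∃ v ∈ F z, ‖w - v‖ ≤ ε) := by
  obtain ⟨δ₀, hδ₀, husc⟩ := hUSC z ε hε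
  have hcover : F z ⊆ ⋃ v ∈ F z, Metric.ball v (ε/2) := fun v hv =>
    Set.mem_biUnion hv (Metric.mem_ball_self (half_pos hε))
  obtain ⟨b, hbsub, hbfin, hbcov⟩ := (hVal z).2.1.elim_finite_subcover_image
    (fun v _ => Metric.isOpen_ball) hcover
  haveI : Finite b := hbfin
  have hsel : ∀ v : b, ∃ δ > (0:ℝ), ∀ y : Euc n, ‖y - z‖ < δ →
      ∃ w ∈ F y, ‖w - v.1‖ ≤ ε/2 := fun v => hLSC z v.1 (hbsub v.2) (ε/2) (half_pos hε)
  choose δv hδvpos hδvsel using hsel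
  obtain ⟨δ₁, hδ₁pos, hδ₁le⟩ : ∃ δ₁ > (0:ℝ), ∀ v : b, δ₁ ≤ δv v := by
    rcases isEmpty_or_nonempty b with h | h
    · exact ⟨1, one_pos, fun v => (h.false v).elim⟩
    · obtain ⟨v₀, hv₀⟩ := Finite.exists_min δv
      exact ⟨δv v₀, hδvpos v₀, hv₀⟩
  refine ⟨min δ₀ δ₁, lt_min hδ₀ hδ₁pos, fun y hy => ⟨fun v hv => ?_, fun w hw => ?_⟩⟩
  · obtain ⟨vi, hvib, hvball⟩ := Set.mem_iUnion₂.1 (hbcov hv)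
    obtain ⟨w, hwF, hwv⟩ := hδvsel ⟨vi, hvib⟩ y (lt_of_lt_of_le hy (min_le_right _ _) |>.trans_le (hδ₁le ⟨vi, hvib⟩))
    refine ⟨w, hwF, ?_⟩
    have : ‖w - v‖ ≤ ‖w - vi‖ + ‖vi - v‖ := norm_sub_le_norm_sub_add_norm_sub w vi v
    have h2 : ‖vi - v‖ < ε/2 := by
      rw [← dist_eq_norm, dist_comm]; exact Metric.mem_ball.1 hvball
    linarith
  · exact husc y (lt_of_lt_of_le hy (min_le_left _ _)) hw

lemma proj_cont {n : ℕ} (F : Euc n → Set (Euc n)) (hUSC : USC F) (hLSC : LSC F)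
    (hVal : NCCValues F) (η : Euc n) (f : Euc n → Euc n)
    (hf : ∀ z, f z ∈ F z ∧ (∀ w ∈ F z, ‖η - f z‖ ≤ ‖η - w‖) ∧
      ∀ w ∈ F z, @inner ℝ _ _ (η - f z) (w - f z) ≤ (0:ℝ)) :
    Continuous f := by
  rw [continuous_iff_continuousAt]
  intro z
  rw [Metric.continuousAt_iff]
  intro ε' hε'
  set R := ‖η - f z‖ with hR
  have hRnn : 0 ≤ R := norm_nonneg _
  set ε : ℝ := min (min (ε'/4) 1) ((ε'/8)^2/(R+1)) with hεdef
  have hεpos : 0 < ε := by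
    apply lt_min (lt_min (by linarith) one_pos)
    positivity
  obtain ⟨δ, hδpos, hδ⟩ := haus_cont F hUSC hLSC hVal z hεpos
  refine ⟨δ, hδpos, fun {y} hy => ?_⟩
  rw [dist_eq_norm] at hy
  obtain ⟨h1, h2⟩ := hδ y hy
  -- a' ∈ F y close to f z
  obtain ⟨a', ha'F, ha'⟩ := h1 (f z) (hf z).1
  -- b' ∈ F z close to f y
  obtain ⟨b', hb'F, hb'⟩ := h2 (f y) (hf y).1
  have hηb : ‖η - f y‖ ≤ R + ε := by
    have := (hf y).2.1 a' ha'F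
    have h3 : ‖η - a'‖ ≤ ‖η - f z‖ + ‖a' - f z‖ := by
      have := norm_sub_le_norm_sub_add_norm_sub η (f z) a'
      simpa [norm_sub_rev (a') (f z)] using this
    linarith
  have hq : ‖b' - f z‖^2 ≤ 4*ε*(R+ε) := by
    have hobt := (hf z).2.2 b' hb'F
    have hps : ‖(η - f z) - (b' - f z)‖^2
        = ‖η - f z‖^2 - 2 * @inner ℝ _ _ (η - f z) (b' - f z) + ‖b' - f z‖^2 :=
      norm_sub_sq_real _ _
    have hsimp : (η - f z) - (b' - f z) = η - b' := by abel
    rw [hsimp] at hps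
    have hηb' : ‖η - b'‖ ≤ R + 2*ε := by
      have h4 : ‖η - b'‖ ≤ ‖η - f y‖ + ‖b' - f y‖ := by
        have := norm_sub_le_norm_sub_add_norm_sub η (f y) b'
        simpa [norm_sub_rev b' (f y)] using this
      have h5 : ‖b' - f y‖ = ‖f y - b'‖ := norm_sub_rev _ _
      linarith
    nlinarith [norm_nonneg (η - b'), norm_nonneg (b' - f z)]
  have hqle : ‖b' - f z‖ ≤ ε'/4 := by
    have hε1 : ε ≤ 1 := le_trans (min_le_left _ _) (min_le_right _ _)
    have hε2 : ε ≤ (ε'/8)^2/(R+1) := min_le_right _ _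
    have : ‖b' - f z‖^2 ≤ (ε'/4)^2 := by
      have h6 : 4*ε*(R+ε) ≤ 4*ε*(R+1) := by nlinarith
      have h7 : 4*ε*(R+1) ≤ 4*(ε'/8)^2 := by
        have := (le_div_iff₀ (by linarith : (0:ℝ) < R+1)).1 hε2
        nlinarith
      nlinarith
    nlinarith [norm_nonneg (b' - f z)]
  have hfin : ‖f y - f z‖ ≤ ‖f y - b'‖ + ‖b' - f z‖ := norm_sub_le_norm_sub_add_norm_sub _ _ _
  rw [dist_eq_norm]
  have hεsmall : ε ≤ ε'/4 := le_trans (min_le_left _ _) (min_le_left _ _)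
  calc ‖f y - f z‖ ≤ ‖f y - b'‖ + ‖b' - f z‖ := hfin
    _ ≤ ε'/4 + ε'/4 := add_le_add (le_trans hb' hεsmall) hqle
    _ < ε' := by linarith

def eulerNodes {n : ℕ} (f : Euc n → Euc n) (x : Euc n) (h : ℝ) : ℕ → Euc n
  | 0 => x
  | j+1 => eulerNodes f x h j + h • f (eulerNodes f x h j)

section Euler
variable {n : ℕ} (f : Euc n → Euc n) (x : Euc n) (M ρ T : ℝ)

lemma euler_nodes_bound (hf : Continuous f) (hM : 0 < M) (hT : 0 < T) (hTM : T * M ≤ ρ)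
    (hfM : ∀ z ∈ Metric.closedBall x ρ, ‖f z‖ ≤ M) (k : ℕ) :
    ∀ j ≤ k+1, ‖eulerNodes f x (T/(k+1)) j - x‖ ≤ j * (T/(k+1)) * M := by
  set h := T/(k+1) with hh
  have hhpos : 0 < h := by positivity
  intro j hj
  induction j with
  | zero => simp [eulerNodes]
  | succ j ih =>
    have hj' : j ≤ k + 1 := Nat.le_of_succ_le hj
    have hjh := ih hj'
    have hmem : eulerNodes f x h j ∈ Metric.closedBall x ρ := by
      rw [Metric.mem_closedBall, dist_eq_norm]
      refine hjh.trans (le_trans ?_ hTM)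
      have hj2 : (j:ℝ) ≤ (k:ℝ)+1 := by exact_mod_cast hj'
      have : (j:ℝ) * h ≤ ((k:ℝ)+1) * h := by nlinarith
      have hkh : ((k:ℝ)+1) * h = T := by rw [hh]; field_simp
      nlinarith
    show ‖eulerNodes f x h j + h • f (eulerNodes f x h j) - x‖ ≤ _
    have : eulerNodes f x h j + h • f (eulerNodes f x h j) - x
        = (eulerNodes f x h j - x) + h • f (eulerNodes f x h j) := by abel
    rw [this]
    refine (norm_add_le _ _).trans ?_
    rw [norm_smul, Real.norm_eq_abs, abs_of_pos hhpos]
    have := hfM _ hmem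
    push_cast
    nlinarith

/-- Euler velocity. -/
def eulerVel {n : ℕ} (f : Euc n → Euc n) (x : Euc n) (T : ℝ) (k : ℕ) (s : ℝ) : Euc n :=
  f (eulerNodes f x (T/(k+1)) (min ⌊s/(T/(k+1))⌋₊ (k+1)))

lemma eulerVel_measurable (hf : Continuous f) (k : ℕ) : Measurable (eulerVel f x T k) := by
  apply (hf.measurable.comp (measurable_from_top (f := fun j : ℕ =>
    eulerNodes f x (T/(k+1)) (min j (k+1))))).comp
  exact (Nat.measurable_floor.comp (measurable_id.div_const _))

lemma eulerVel_bound (hM : 0 < M) (hT : 0 < T) (hTM : T * M ≤ ρ)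
    (hfM : ∀ z ∈ Metric.closedBall x ρ, ‖f z‖ ≤ M) (hf : Continuous f) (k : ℕ) (s : ℝ) :
    ‖eulerVel f x T k s‖ ≤ M := by
  set h := T/(k+1) with hh
  have hmem : eulerNodes f x h (min ⌊s/h⌋₊ (k+1)) ∈ Metric.closedBall x ρ := by
    rw [Metric.mem_closedBall, dist_eq_norm]
    refine (euler_nodes_bound f x M ρ T hf hM hT hTM hfM k _ (min_le_right _ _)).trans ?_
    rw [← hh]
    have hhpos : 0 < h := by positivity
    have hj2 : ((min ⌊s/h⌋₊ (k+1) : ℕ):ℝ) ≤ (k:ℝ)+1 := by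
      exact_mod_cast min_le_right ⌊s/h⌋₊ (k+1)
    have hkh : ((k:ℝ)+1) * h = T := by rw [hh]; field_simp
    have h1 := mul_le_mul_of_nonneg_right (mul_le_mul_of_nonneg_right hj2 hhpos.le) hM.le
    have h2 := mul_le_mul_of_nonneg_right hkh.le hM.le
    nlinarith
  exact hfM _ hmem

lemma eulerVel_intervalIntegrable (hM : 0 < M) (hT : 0 < T) (hTM : T * M ≤ ρ)
    (hfM : ∀ z ∈ Metric.closedBall x ρ, ‖f z‖ ≤ M) (hf : Continuous f) (k : ℕ) (a b : ℝ) :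
    IntervalIntegrable (eulerVel f x T k) volume a b := by
  rw [intervalIntegrable_iff]
  refine Integrable.mono' (g := fun _ => M) ?_ ?_ ?_
  · exact integrableOn_const measure_Ioc_lt_top.ne
  · exact ((eulerVel_measurable f x T hf k).aestronglyMeasurable).restrict
  · exact Filter.Eventually.of_forall fun s => eulerVel_bound f x M ρ T hM hT hTM hfM hf k s

lemma eulerVel_eq_on (hT : 0 < T) (k j : ℕ) (hj : j ≤ k) (s : ℝ)
    (hs : s ∈ Set.Ioo ((j:ℝ) * (T/(k+1))) (((j:ℝ)+1) * (T/(k+1)))) :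
    eulerVel f x T k s = f (eulerNodes f x (T/(k+1)) j) := by
  set h := T/(k+1) with hh
  have hhpos : 0 < h := by positivity
  have hfl : ⌊s/h⌋₊ = j := by
    have h1 : (j:ℝ) ≤ s/h := by
      rw [le_div_iff₀ hhpos]
      exact hs.1.le
    have h2 : s/h < (j:ℝ)+1 := by
      rw [div_lt_iff₀ hhpos]
      exact hs.2
    rw [Nat.floor_eq_iff (le_trans (Nat.cast_nonneg j) h1)]
    exact ⟨h1, by exact_mod_cast h2⟩
  rw [eulerVel, ← hh, hfl, min_eq_left (by omega)]

lemma euler_node_eq (hM : 0 < M) (hT : 0 < T) (hTM : T * M ≤ ρ)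
    (hfM : ∀ z ∈ Metric.closedBall x ρ, ‖f z‖ ≤ M) (hf : Continuous f) (k : ℕ) :
    ∀ j ≤ k+1, x + ∫ s in (0:ℝ)..((j:ℝ) * (T/(k+1))), eulerVel f x T k s
      = eulerNodes f x (T/(k+1)) j := by
  set h := T/(k+1) with hh
  have hhpos : 0 < h := by positivity
  intro j hj
  induction j with
  | zero => simp [eulerNodes]
  | succ j ih =>
    have hj' : j ≤ k + 1 := Nat.le_of_succ_le hj
    have hkey := ih hj'
    have hsplit : ∫ s in (0:ℝ)..(((j:ℝ)+1) * h), eulerVel f x T k s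
        = (∫ s in (0:ℝ)..((j:ℝ) * h), eulerVel f x T k s)
          + ∫ s in ((j:ℝ) * h)..(((j:ℝ)+1) * h), eulerVel f x T k s := by
      rw [intervalIntegral.integral_add_adjacent_intervals
        (eulerVel_intervalIntegrable f x M ρ T hM hT hTM hfM hf k _ _)
        (eulerVel_intervalIntegrable f x M ρ T hM hT hTM hfM hf k _ _)]
    have hjk : j ≤ k := by omega
    have hcongr : ∫ s in ((j:ℝ) * h)..(((j:ℝ)+1) * h), eulerVel f x T k s
        = ∫ s in ((j:ℝ) * h)..(((j:ℝ)+1) * h), f (eulerNodes f x h j) := by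
      apply intervalIntegral.integral_congr_ae
      have hsing : ∀ᵐ s : ℝ ∂volume, s ∉ ({((j:ℝ)+1) * h} : Set ℝ) := by
        rw [← MeasureTheory.measure_eq_zero_iff_ae_notMem]
        exact measure_singleton _
      filter_upwards [hsing] with s hs hmem
      have hlt : (j:ℝ)*h < ((j:ℝ)+1)*h := by nlinarith
      rw [Set.uIoc_of_le hlt.le] at hmem
      have hs2 : s < ((j:ℝ)+1)*h := lt_of_le_of_ne hmem.2 (by simpa using hs)
      exact eulerVel_eq_on f x T hT k j hjk s ⟨hmem.1, hs2⟩
    have hconst : ∫ s in ((j:ℝ) * h)..(((j:ℝ)+1) * h), f (eulerNodes f x h j)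
        = h • f (eulerNodes f x h j) := by
      rw [intervalIntegral.integral_const]
      congr 1
      ring
    have hcast : ((j+1 : ℕ):ℝ) = (j:ℝ)+1 := by push_cast; ring
    rw [hcast, hsplit, hcongr, hconst]
    show x + ((∫ s in (0:ℝ)..((j:ℝ) * h), eulerVel f x T k s) + h • f (eulerNodes f x h j))
      = eulerNodes f x h (j+1)
    rw [← add_assoc, hkey]
    rfl

lemma eulerX_diff (hM : 0 < M) (hT : 0 < T) (hTM : T * M ≤ ρ)
    (hfM : ∀ z ∈ Metric.closedBall x ρ, ‖f z‖ ≤ M) (hf : Continuous f) (k : ℕ) (t t' : ℝ) :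
    ‖(x + ∫ s in (0:ℝ)..t, eulerVel f x T k s) - (x + ∫ s in (0:ℝ)..t', eulerVel f x T k s)‖
      ≤ M * |t - t'| := by
  have hdiff : (x + ∫ s in (0:ℝ)..t, eulerVel f x T k s)
      - (x + ∫ s in (0:ℝ)..t', eulerVel f x T k s)
      = ∫ s in t'..t, eulerVel f x T k s := by
    rw [add_sub_add_left_eq_sub]
    rw [intervalIntegral.integral_interval_sub_left
      (eulerVel_intervalIntegrable f x M ρ T hM hT hTM hfM hf k _ _)
      (eulerVel_intervalIntegrable f x M ρ T hM hT hTM hfM hf k _ _)]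
  rw [hdiff]
  have := intervalIntegral.norm_integral_le_of_norm_le_const
    (C := M) (f := eulerVel f x T k) (a := t') (b := t)
    (fun s _ => eulerVel_bound f x M ρ T hM hT hTM hfM hf k s)
  exact this

lemma eulerVel_close (hM : 0 < M) (hT : 0 < T) (hTM : T * M ≤ ρ)
    (hfM : ∀ z ∈ Metric.closedBall x ρ, ‖f z‖ ≤ M) (hf : Continuous f) (k : ℕ) (s : ℝ)
    (hs : s ∈ Set.Icc 0 T) :
    ∃ z : Euc n, eulerVel f x T k s = f z ∧
      ‖z - (x + ∫ σ in (0:ℝ)..s, eulerVel f x T k σ)‖ ≤ M * (T/(k+1)) := by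
  set h := T/(k+1) with hh
  have hhpos : 0 < h := by positivity
  have hkh : ((k:ℝ)+1) * h = T := by rw [hh]; field_simp
  have hfloor_le : ⌊s/h⌋₊ ≤ k+1 := by
    have h1 : s/h ≤ (k:ℝ)+1 := by
      rw [div_le_iff₀ hhpos]
      nlinarith [hs.2]
    calc ⌊s/h⌋₊ ≤ ⌊((k:ℝ)+1)⌋₊ := Nat.floor_le_floor h1
      _ = k+1 := by
          have : ((k:ℝ)+1) = ((k+1 : ℕ):ℝ) := by push_cast; ring
          rw [this, Nat.floor_natCast]
  set j := ⌊s/h⌋₊ with hj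
  have hmin : min ⌊s/h⌋₊ (k+1) = j := min_eq_left hfloor_le
  refine ⟨eulerNodes f x h j, ?_, ?_⟩
  · rw [eulerVel, ← hh, hmin]
  · have hnode := euler_node_eq f x M ρ T hM hT hTM hfM hf k j hfloor_le
    rw [← hh] at hnode
    rw [← hnode]
    have hd := eulerX_diff f x M ρ T hM hT hTM hfM hf k ((j:ℝ) * h) s
    refine hd.trans ?_
    have hjle : (j:ℝ) * h ≤ s := by
      have h0 : (j:ℝ) ≤ s/h := Nat.floor_le (div_nonneg hs.1 hhpos.le)
      calc (j:ℝ) * h ≤ (s/h) * h := by nlinarith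
        _ = s := by field_simp
    have hlt : s < ((j:ℝ)+1) * h := by
      have h0 : s/h < (j:ℝ)+1 := Nat.lt_floor_add_one _
      calc s = (s/h) * h := by field_simp
        _ < ((j:ℝ)+1) * h := by nlinarith
    have : |(j:ℝ) * h - s| ≤ h := by
      rw [abs_le]
      constructor <;> nlinarith
    nlinarith [this, hM.le, abs_nonneg ((j:ℝ)*h - s)]

end Euler

lemma peano {n : ℕ} (f : Euc n → Euc n) (hf : Continuous f) (x : Euc n) (M ρ T : ℝ)
    (hM : 0 < M) (hT : 0 < T) (hTM : T * M ≤ ρ)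
    (hfM : ∀ z ∈ Metric.closedBall x ρ, ‖f z‖ ≤ M) :
    ∃ φ : ℝ → Euc n, Continuous φ ∧ (∀ t, φ t ∈ Metric.closedBall x ρ) ∧
      ∀ t ∈ Set.Icc (0:ℝ) T, φ t = x + ∫ s in (0:ℝ)..t, f (φ s) := by
  haveI : CompactSpace (Set.Icc (0:ℝ) T) := isCompact_iff_compactSpace.mp isCompact_Icc
  set X : ℕ → ℝ → Euc n := fun k t => x + ∫ s in (0:ℝ)..t, eulerVel f x T k s with hX
  have hXdiff : ∀ k t t', ‖X k t - X k t'‖ ≤ M * |t - t'| :=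
    fun k t t' => eulerX_diff f x M ρ T hM hT hTM hfM hf k t t'
  have hXcont : ∀ k, Continuous (X k) := by
    intro k
    rw [Metric.continuous_iff]
    intro t ε hε
    refine ⟨ε/(M+1), by positivity, fun t' ht' => ?_⟩
    rw [dist_eq_norm]
    calc ‖X k t' - X k t‖ ≤ M * |t' - t| := hXdiff k t' t
      _ < ε := by
          rw [Real.dist_eq] at ht'
          have h1 : M * |t' - t| ≤ M * (ε/(M+1)) :=
            mul_le_mul_of_nonneg_left ht'.le hM.le
          have : M * (ε/(M+1)) < ε := by
            rw [mul_div_assoc']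
            rw [div_lt_iff₀ (by linarith)]
            nlinarith
          linarith
  have hXK : ∀ k, ∀ t ∈ Set.Icc (0:ℝ) T, X k t ∈ Metric.closedBall x ρ := by
    intro k t ht
    rw [Metric.mem_closedBall, dist_eq_norm]
    have h0 : X k 0 = x := by simp [hX]
    have := hXdiff k t 0
    rw [h0] at this
    refine this.trans ?_
    rw [sub_zero, abs_of_nonneg ht.1]
    nlinarith [ht.2]
  set Ψ : ℕ → (Set.Icc (0:ℝ) T →ᵇ Euc n) := fun k =>
    BoundedContinuousFunction.mkOfCompact ⟨fun t => X k t.1, (hXcont k).comp continuous_subtype_val⟩ with hΨ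
  have hΨapp : ∀ k t, Ψ k t = X k t.1 := fun k t => rfl
  set A : Set (Set.Icc (0:ℝ) T →ᵇ Euc n) :=
    {ψ | (∀ a b : Set.Icc (0:ℝ) T, ‖ψ a - ψ b‖ ≤ M * |a.1 - b.1|) ∧
      ∀ t, ψ t ∈ Metric.closedBall x ρ} with hA
  have hclosed : IsClosed A := by
    have hP : IsClosed {ψ : Set.Icc (0:ℝ) T →ᵇ Euc n |
        ∀ a b : Set.Icc (0:ℝ) T, ‖ψ a - ψ b‖ ≤ M * |a.1 - b.1|} := by
      rw [Set.setOf_forall]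
      refine isClosed_iInter fun a => ?_
      rw [Set.setOf_forall]
      refine isClosed_iInter fun b => ?_
      exact isClosed_le (((continuous_eval_const (x := a)).sub
        (continuous_eval_const (x := b))).norm) continuous_const
    have hQ : IsClosed {ψ : Set.Icc (0:ℝ) T →ᵇ Euc n |
        ∀ t, ψ t ∈ Metric.closedBall x ρ} := by
      rw [Set.setOf_forall]
      exact isClosed_iInter fun t => Metric.isClosed_closedBall.preimage
        (continuous_eval_const (x := t))
    exact hP.inter hQ
  have hequi : Equicontinuous (fun ψ : A => (ψ.1 : Set.Icc (0:ℝ) T → Euc n)) := by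
    intro x₀
    rw [Metric.equicontinuousAt_iff]
    intro ε hε
    refine ⟨ε/(M+1), by positivity, fun b hb ψ => ?_⟩
    have h1 := ψ.2.1 x₀ b
    rw [dist_eq_norm]
    have h2 : |x₀.1 - b.1| = dist x₀ b := by
      rw [Subtype.dist_eq, Real.dist_eq]
    have hb' : dist x₀ b ≤ ε/(M+1) := by rw [dist_comm]; exact hb.le
    calc ‖ψ.1 x₀ - ψ.1 b‖ ≤ M * |x₀.1 - b.1| := h1
      _ = M * dist x₀ b := by rw [h2]
      _ ≤ M * (ε/(M+1)) := mul_le_mul_of_nonneg_left hb' hM.le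
      _ < ε := by
          rw [mul_div_assoc', div_lt_iff₀ (by linarith)]
          nlinarith
  have hcomp : IsCompact A :=
    BoundedContinuousFunction.arzela_ascoli₂ (Metric.closedBall x ρ) (isCompact_closedBall x ρ)
      A hclosed (fun ψ t hψ => hψ.2 t) hequi
  have hmem : ∀ k, Ψ k ∈ A := by
    intro k
    constructor
    · intro a b
      exact hXdiff k a.1 b.1
    · intro t
      exact hXK k t.1 t.2
  obtain ⟨psiL, hψA, κ, hκ, hκt⟩ := hcomp.tendsto_subseq hmem
  have hd0 : Filter.Tendsto (fun m => dist (Ψ (κ m)) psiL) Filter.atTop (nhds 0) :=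
    tendsto_iff_dist_tendsto_zero.1 hκt
  set φ : ℝ → Euc n := fun t => psiL (Set.projIcc 0 T hT.le t) with hφ
  have hφcont : Continuous φ := psiL.continuous.comp continuous_projIcc
  have hφK : ∀ t, φ t ∈ Metric.closedBall x ρ := fun t => hψA.2 _
  have hpt : ∀ t : Set.Icc (0:ℝ) T,
      Filter.Tendsto (fun m => X (κ m) t.1) Filter.atTop (nhds (psiL t)) := by
    intro t
    rw [tendsto_iff_dist_tendsto_zero]
    refine squeeze_zero (fun _ => dist_nonneg)
      (fun m => ?_) hd0
    show dist ((Ψ (κ m)) t) (psiL t) ≤ dist (Ψ (κ m)) psiL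
    exact BoundedContinuousFunction.dist_coe_le_dist t
  have hstep0 : Filter.Tendsto (fun m => M * (T/((κ m : ℝ)+1))) Filter.atTop (nhds 0) := by
    have hκtop : Filter.Tendsto (fun m => ((κ m : ℝ)+1)) Filter.atTop Filter.atTop := by
      apply Filter.tendsto_atTop_add_const_right
      exact tendsto_natCast_atTop_atTop.comp hκ.tendsto_atTop
    have h1 : Filter.Tendsto (fun m => T/((κ m : ℝ)+1)) Filter.atTop (nhds 0) :=
      Filter.Tendsto.div_atTop tendsto_const_nhds hκtop
    have := h1.const_mul M
    simpa using this
  refine ⟨φ, hφcont, hφK, fun t ht => ?_⟩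
  have h1 : Filter.Tendsto (fun m => X (κ m) t) Filter.atTop (nhds (psiL ⟨t, ht⟩)) := hpt ⟨t, ht⟩
  have h2 : Filter.Tendsto (fun m => ∫ s in (0:ℝ)..t, eulerVel f x T (κ m) s)
      Filter.atTop (nhds (∫ s in (0:ℝ)..t, f (φ s))) := by
    have hconv : ∀ s ∈ Set.Ioc (0:ℝ) t,
        Filter.Tendsto (fun m => eulerVel f x T (κ m) s) Filter.atTop (nhds (f (φ s))) := by
      intro s hs
      have hsIcc : s ∈ Set.Icc (0:ℝ) T := ⟨hs.1.le, hs.2.trans ht.2⟩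
      have hzm := fun m => eulerVel_close f x M ρ T hM hT hTM hfM hf (κ m) s hsIcc
      choose z hz1 hz2 using hzm
      have hφs : φ s = psiL ⟨s, hsIcc⟩ := by
        simp only [hφ]
        rw [Set.projIcc_of_mem hT.le hsIcc]
      have hztend : Filter.Tendsto z Filter.atTop (nhds (φ s)) := by
        rw [tendsto_iff_dist_tendsto_zero]
        have hbound : ∀ m, dist (z m) (φ s) ≤ M * (T/((κ m : ℝ)+1)) + dist (Ψ (κ m)) psiL := by
          intro m
          have hd1 : dist (z m) (X (κ m) s) ≤ M * (T/((κ m : ℝ)+1)) := by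
            rw [dist_eq_norm]
            exact_mod_cast hz2 m
          have hd2 : dist (X (κ m) s) (φ s) ≤ dist (Ψ (κ m)) psiL := by
            rw [hφs]
            show dist ((Ψ (κ m)) ⟨s, hsIcc⟩) (psiL ⟨s, hsIcc⟩) ≤ dist (Ψ (κ m)) psiL
            exact BoundedContinuousFunction.dist_coe_le_dist (⟨s, hsIcc⟩ : Set.Icc (0:ℝ) T)
          calc dist (z m) (φ s) ≤ dist (z m) (X (κ m) s) + dist (X (κ m) s) (φ s) :=
                dist_triangle _ _ _
            _ ≤ M * (T/((κ m : ℝ)+1)) + dist (Ψ (κ m)) psiL := add_le_add hd1 hd2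
        refine squeeze_zero (fun _ => dist_nonneg) hbound ?_
        have := hstep0.add hd0
        simpa using this
      have : (fun m => eulerVel f x T (κ m) s) = fun m => f (z m) := funext hz1
      rw [this]
      exact (hf.tendsto (φ s)).comp hztend
    rw [intervalIntegral.integral_of_le ht.1]
    have heq : ∀ m, ∫ s in (0:ℝ)..t, eulerVel f x T (κ m) s
        = ∫ s in Set.Ioc (0:ℝ) t, eulerVel f x T (κ m) s := fun m =>
      intervalIntegral.integral_of_le ht.1
    simp_rw [heq]
    apply MeasureTheory.tendsto_integral_of_dominated_convergence (fun _ => M)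
    · exact fun m => ((eulerVel_measurable f x T hf (κ m)).aestronglyMeasurable).restrict
    · exact MeasureTheory.integrableOn_const measure_Ioc_lt_top.ne
    · exact fun m => Filter.Eventually.of_forall
        (fun s => eulerVel_bound f x M ρ T hM hT hTM hfM hf (κ m) s)
    · rw [MeasureTheory.ae_restrict_iff' measurableSet_Ioc]
      exact Filter.Eventually.of_forall hconv
  have h2' : Filter.Tendsto (fun m => X (κ m) t) Filter.atTop
      (nhds (x + ∫ s in (0:ℝ)..t, f (φ s))) := by
    have := (tendsto_const_nhds (x := x) (f := Filter.atTop (α := ℕ))).add h2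
    exact this
  have hfin := tendsto_nhds_unique h1 h2'
  have hφt : φ t = psiL ⟨t, ht⟩ := by
    simp only [hφ]
    rw [Set.projIcc_of_mem hT.le ht]
  rw [hφt, hfin]

/-- Appendix Lemma: infinitesimal decrease from monotonicity along solutions. -/
theorem infinitesimal_decrease {n : ℕ} (hn : 1 ≤ n)
    (F : Euc n → Set (Euc n))
    (hUSC : USC F) (hLSC : LSC F) (hVal : NCCValues F)
    (O : Set (Euc n)) (hO : IsOpen O)
    (B : Euc n → ℝ) (hB : ContDiff ℝ 1 B)
    (hmono : ∀ (a b : ℝ) (φ : ℝ → Euc n), a ≤ b →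
      IsSolution F (fun _ => 0) (Icc a b) φ →
      (∀ s ∈ Icc a b, φ s ∈ O) →
      ∀ t t' : ℝ, a ≤ t → t ≤ t' → t' ≤ b → B (φ t') ≤ B (φ t)) :
    ∀ x ∈ O, ∀ η ∈ F x, fderiv ℝ B x η ≤ 0 := by
  intro x hx η hη
  by_contra hpos
  push_neg at hpos
  set c := fderiv ℝ B x η with hc
  have hfdc : Continuous (fun p : Euc n × Euc n => fderiv ℝ B p.1 p.2) :=
    hB.continuous_fderiv_apply one_ne_zero
  have hopen : IsOpen {p : Euc n × Euc n | c/2 < fderiv ℝ B p.1 p.2} :=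
    isOpen_lt continuous_const hfdc
  obtain ⟨ρ₁, hρ₁, hball⟩ := Metric.isOpen_iff.1 hopen (x, η)
    (by simp only [Set.mem_setOf_eq]; linarith)
  have hfd2 : ∀ y w : Euc n, ‖y - x‖ < ρ₁ → ‖w - η‖ < ρ₁ → c/2 < fderiv ℝ B y w := by
    intro y w h1 h2
    have hmem : ((y, w) : Euc n × Euc n) ∈ Metric.ball ((x, η) : Euc n × Euc n) ρ₁ := by
      rw [Metric.mem_ball, Prod.dist_eq]
      rw [dist_eq_norm, dist_eq_norm]
      exact max_lt h1 h2
    exact hball hmem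
  set r := ρ₁/2 with hr
  have hrpos : 0 < r := by positivity
  obtain ⟨δ₁, hδ₁, hlsc⟩ := hLSC x η hη r hrpos
  obtain ⟨d, hd, hdO⟩ := Metric.isOpen_iff.1 hO x hx
  have hproj : ∀ z : Euc n, ∃ v ∈ F z, (∀ w ∈ F z, ‖η - v‖ ≤ ‖η - w‖) ∧
      ∀ w ∈ F z, @inner ℝ _ _ (η - v) (w - v) ≤ (0:ℝ) :=
    fun z => proj_exists (F z) (hVal z).1 (hVal z).2.1 (hVal z).2.2 η
  choose f hfF hfmin hfobt using hproj
  have hfcont : Continuous f := proj_cont F hUSC hLSC hVal η f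
    (fun z => ⟨hfF z, hfmin z, hfobt z⟩)
  have hfr : ∀ z, ‖z - x‖ < δ₁ → ‖f z - η‖ ≤ r := by
    intro z hz
    obtain ⟨w, hwF, hw⟩ := hlsc z hz
    have h1 := hfmin z w hwF
    have h2 : ‖f z - η‖ = ‖η - f z‖ := norm_sub_rev _ _
    have h3 : ‖η - w‖ = ‖w - η‖ := norm_sub_rev _ _
    linarith
  set M := ‖η‖ + r with hM
  have hMpos : 0 < M := add_pos_of_nonneg_of_pos (norm_nonneg η) hrpos
  set ρ := min (min (ρ₁/2) (δ₁/2)) (d/2) with hρ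
  have hρpos : 0 < ρ := lt_min (lt_min (by positivity) (by positivity)) (by positivity)
  have hρρ₁ : ρ < ρ₁ := lt_of_le_of_lt ((min_le_left _ _).trans (min_le_left _ _)) (by linarith)
  have hρδ : ρ < δ₁ := lt_of_le_of_lt ((min_le_left _ _).trans (min_le_right _ _)) (by linarith)
  have hρd : ρ < d := lt_of_le_of_lt (min_le_right _ _) (by linarith)
  have hfM : ∀ z ∈ Metric.closedBall x ρ, ‖f z‖ ≤ M := by
    intro z hz
    rw [Metric.mem_closedBall, dist_eq_norm] at hz
    have h1 := hfr z (lt_of_le_of_lt hz hρδ)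
    calc ‖f z‖ = ‖(f z - η) + η‖ := by rw [sub_add_cancel]
      _ ≤ ‖f z - η‖ + ‖η‖ := norm_add_le _ _
      _ ≤ r + ‖η‖ := by linarith
      _ = M := by rw [hM]; ring
  set T := ρ / M with hT
  have hTpos : 0 < T := by positivity
  have hTM : T * M ≤ ρ := by
    rw [hT, div_mul_cancel₀]
    exact hMpos.ne'
  obtain ⟨φ, hφcont, hφK, hφeq⟩ := peano f hfcont x M ρ T hMpos hTpos hTM hfM
  set g : ℝ → Euc n := fun s => f (φ s) with hg
  have hgcont : Continuous g := hfcont.comp hφcont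
  set Φ : ℝ → Euc n := fun t => x + ∫ s in (0:ℝ)..t, g s with hΦ
  have hΦeq : ∀ t ∈ Icc (0:ℝ) T, Φ t = φ t := fun t ht => (hφeq t ht).symm
  have hsol : IsSolution F (fun _ => 0) (Icc 0 T) Φ := by
    refine ⟨g, hgcont.locallyIntegrable, fun t₀ _ t _ => ?_, ?_⟩
    · show x + ∫ s in (0:ℝ)..t, g s = (x + ∫ s in (0:ℝ)..t₀, g s) + ∫ s in t₀..t, g s
      rw [add_assoc, intervalIntegral.integral_add_adjacent_intervals
        (hgcont.intervalIntegrable _ _) (hgcont.intervalIntegrable _ _)]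
    · refine Filter.Eventually.of_forall fun s hs => ?_
      have h1 : g s ∈ F (Φ s) := by
        rw [hΦeq s hs]
        exact hfF (φ s)
      have h2 : (0 : Euc n) ∈ Metric.closedBall (0 : Euc n) ((fun _ => (0:ℝ)) (Φ s)) :=
        Metric.mem_closedBall_self le_rfl
      have := Set.add_mem_add h1 h2
      rwa [add_zero] at this
  have hΦO : ∀ s ∈ Icc (0:ℝ) T, Φ s ∈ O := by
    intro s hs
    apply hdO
    rw [hΦeq s hs]
    have := hφK s
    rw [Metric.mem_closedBall] at this
    rw [Metric.mem_ball]
    exact lt_of_le_of_lt this hρd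
  have hmono' := hmono 0 T Φ hTpos.le hsol hΦO 0 T le_rfl hTpos.le le_rfl
  have hd1 : ∀ t : ℝ, HasDerivAt Φ (g t) t := by
    intro t
    have h1 : HasDerivAt (fun u => ∫ s in (0:ℝ)..u, g s) (g t) t :=
      intervalIntegral.integral_hasDerivAt_right (hgcont.intervalIntegrable _ _)
        (hgcont.stronglyMeasurableAtFilter _ _) hgcont.continuousAt
    exact h1.const_add x
  have hBd : ∀ t : ℝ, HasDerivAt (fun τ => B (Φ τ)) (fderiv ℝ B (Φ t) (g t)) t := fun t =>
    (hB.differentiable one_ne_zero (Φ t)).hasFDerivAt.comp_hasDerivAt t (hd1 t)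
  have hΦc : Continuous Φ := continuous_iff_continuousAt.2 fun t => (hd1 t).continuousAt
  have hintc : Continuous (fun t => fderiv ℝ B (Φ t) (g t)) :=
    hfdc.comp (hΦc.prodMk hgcont)
  have hftc := intervalIntegral.integral_eq_sub_of_hasDerivAt
    (f := fun τ => B (Φ τ)) (f' := fun t => fderiv ℝ B (Φ t) (g t))
    (a := 0) (b := T) (fun t _ => hBd t) (hintc.intervalIntegrable 0 T)
  have hlow : ∀ t ∈ Icc (0:ℝ) T, (fun _ => c/2) t ≤ fderiv ℝ B (Φ t) (g t) := by
    intro t ht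
    have hK : Φ t ∈ Metric.closedBall x ρ := by
      rw [hΦeq t ht]; exact hφK t
    rw [Metric.mem_closedBall, dist_eq_norm] at hK
    have hφx : ‖φ t - x‖ ≤ ρ := by
      have := hφK t
      rwa [Metric.mem_closedBall, dist_eq_norm] at this
    have h2 : ‖g t - η‖ ≤ r := by
      show ‖f (φ t) - η‖ ≤ r
      exact hfr (φ t) (lt_of_le_of_lt hφx hρδ)
    exact (hfd2 (Φ t) (g t) (lt_of_le_of_lt hK hρρ₁)
      (lt_of_le_of_lt h2 (by rw [hr]; linarith))).le
  have hcmp := intervalIntegral.integral_mono_on (μ := volume) (a := 0) (b := T)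
    hTpos.le (intervalIntegrable_const) (hintc.intervalIntegrable 0 T) hlow
  rw [intervalIntegral.integral_const, hftc] at hcmp
  simp only [sub_zero, smul_eq_mul] at hcmp
  have hB0 : B (Φ T) ≤ B (Φ 0) := hmono'
  nlinarith
end
end
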